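/- arXiv:1209.2849 — 6 statements merged into one kernel-verified Lean document; each statement's English description precedes it below -/
import Mathlib

section
/- The operator G : X → Y is Fréchet differentiable at every point φ ∈ X, and its Fréchet derivative DG(φ) ∈ L(X,Y) is given by (DG(φ)ψ)(r) = ∫_{Ω̄} J(r,r′)·S′(φ(−τ(r,r′))(r′))·ψ(−τ(r,r′))(r′) dr′ for all ψ ∈ X and all r ∈ Ω̄. -/
/-!
The operator factors as `G = K ∘ N ∘ E`: the delayed evaluation
`E φ = ((r, r') ↦ φ(-τ(r,r'))(r'))` is continuous linear from `X` to `C(Ω̄ × Ω̄)`, the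
superposition operator `N u = S ∘ u` is Fréchet differentiable on `C(Ω̄ × Ω̄)` with derivative
`v ↦ S'(u) v`, because `S'` is Lipschitz (`S''` is bounded) and Taylor's formula gives the
remainder bound `‖N (u + v) - N u - S'(u) v‖ ≤ C ‖v‖²`, and `K k = (r ↦ ∫ J(r,r') k(r,r') dr')` is
continuous linear from `C(Ω̄ × Ω̄)` to `C(Ω̄)`. The chain rule gives `DG(φ) = K ∘ S'(E φ) ∘ E`.
-/

open MeasureTheory Set
open scoped NNReal

noncomputable def lebOn {n : ℕ} (Ω : Set (EuclideanSpace ℝ (Fin n))) :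
    MeasureTheory.Measure Ω :=
  MeasureTheory.Measure.comap Subtype.val MeasureTheory.volume

theorem lipschitzWith_deriv_of_abs_iteratedDeriv_two_le {S : ℝ → ℝ} (hS : ContDiff ℝ 2 S)
    {C : ℝ} (hC : ∀ u, |iteratedDeriv 2 S u| ≤ C) : LipschitzWith C.toNNReal (deriv S) := by
  rw [show (2 : WithTop ℕ∞) = 1 + 1 from rfl, contDiff_succ_iff_deriv] at hS
  refine lipschitzWith_of_nnnorm_deriv_le (hS.2.2.differentiable one_ne_zero) fun u => ?_
  rw [← NNReal.coe_le_coe, coe_nnnorm, Real.norm_eq_abs, ← iteratedDeriv_one, ← iteratedDeriv_succ']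
  exact (hC u).trans (Real.le_coe_toNNReal C)

theorem abs_sub_sub_deriv_mul_le {S : ℝ → ℝ} {C : ℝ≥0} (hS : Differentiable ℝ S)
    (hS' : LipschitzWith C (deriv S)) (a b : ℝ) :
    |S (a + b) - S a - deriv S a * b| ≤ C * b ^ 2 := by
  set g : ℝ → ℝ := fun u => S u - deriv S a * u
  have hg : ∀ u, HasDerivAt g (deriv S u - deriv S a) u := fun u =>
    (hS u).hasDerivAt.sub (by simpa using (hasDerivAt_id u).const_mul (deriv S a))
  have hg' : ∀ u ∈ Metric.closedBall a |b|, ‖deriv g u‖ ≤ C * |b| := fun u hu => by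
    rw [(hg u).deriv, ← dist_eq_norm]
    exact (hS'.dist_le_mul u a).trans (mul_le_mul_of_nonneg_left hu C.2)
  have hmvt := (convex_closedBall a |b|).norm_image_sub_le_of_norm_deriv_le
    (fun u _ => (hg u).differentiableAt) hg' (Metric.mem_closedBall_self (abs_nonneg b))
    (show a + b ∈ Metric.closedBall a |b| by simp)
  simp only [g, Real.norm_eq_abs, add_sub_cancel_left] at hmvt
  calc _ = |S (a + b) - deriv S a * (a + b) - (S a - deriv S a * a)| := by ring_nf
    _ ≤ C * |b| * |b| := hmvt
    _ = C * b ^ 2 := by rw [mul_assoc, ← sq, sq_abs]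

theorem ContinuousMap.hasFDerivAt_comp_left {K : Type*} [TopologicalSpace K] [CompactSpace K]
    (s : C(ℝ, ℝ)) {C : ℝ≥0} (hs : Differentiable ℝ s) (hs' : LipschitzWith C (deriv s))
    (u : C(K, ℝ)) :
    HasFDerivAt (fun v : C(K, ℝ) => s.comp v)
      (ContinuousLinearMap.mul ℝ C(K, ℝ) ((⟨deriv s, hs'.continuous⟩ : C(ℝ, ℝ)).comp u)) u := by
  rw [hasFDerivAt_iff_isLittleO_nhds_zero]
  refine Asymptotics.IsBigO.trans_isLittleO (g := fun v : C(K, ℝ) => ‖v‖ ^ 2)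
    (.of_bound C <| .of_forall fun v => ?_) (Asymptotics.isLittleO_norm_pow_id one_lt_two)
  rw [Real.norm_of_nonneg (by positivity)]
  refine (ContinuousMap.norm_le _ (by positivity)).2 fun x => ?_
  calc _ = |s (u x + v x) - s (u x) - deriv s (u x) * v x| := rfl
    _ ≤ C * v x ^ 2 := abs_sub_sub_deriv_mul_le hs hs' _ _
    _ ≤ C * ‖v‖ ^ 2 := by
      rw [← sq_abs]
      gcongr
      exact v.norm_coe_le_norm x

section IntegralSnd

variable {B E : Type*} [TopologicalSpace B] [CompactSpace B] [MeasurableSpace B]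
  [NormedAddCommGroup E] (μ : Measure B) [IsFiniteMeasure μ]

theorem ContinuousMap.integrable [OpensMeasurableSpace B] (f : C(B, E)) : Integrable f μ :=
  .of_bound f.continuous.aestronglyMeasurable_of_compactSpace ‖f‖ (.of_forall f.norm_coe_le_norm)

variable [NormedSpace ℝ E]

theorem ContinuousMap.norm_integral_le (f : C(B, E)) : ‖∫ b, f b ∂μ‖ ≤ μ.real univ * ‖f‖ := by
  rw [mul_comm]
  exact norm_integral_le_of_norm_le_const (.of_forall f.norm_coe_le_norm)

variable [OpensMeasurableSpace B]

theorem ContinuousMap.continuous_integral : Continuous fun f : C(B, E) => ∫ b, f b ∂μ :=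
  LipschitzWith.continuous (K := (μ.real univ).toNNReal) <| .of_dist_le_mul fun f g => by
    rw [dist_eq_norm, dist_eq_norm, ← integral_sub (f.integrable μ) (g.integrable μ),
      Real.coe_toNNReal _ measureReal_nonneg]
    exact (f - g).norm_integral_le μ

variable {A : Type*} [TopologicalSpace A] [CompactSpace A]

noncomputable def integralSnd : C(A × B, E) →L[ℝ] C(A, E) :=
  LinearMap.mkContinuous
    { toFun := fun k => ⟨fun a => ∫ b, k (a, b) ∂μ,
        (ContinuousMap.continuous_integral μ).comp k.curry.continuous⟩
      map_add' := fun k l => by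
        ext a; exact integral_add ((k.curry a).integrable μ) ((l.curry a).integrable μ)
      map_smul' := fun c k => by ext a; exact integral_smul c _ }
    (μ.real univ) fun k => (ContinuousMap.norm_le _ (by positivity)).2 fun a =>
      ((k.curry a).norm_integral_le μ).trans <| by
        gcongr; exact (ContinuousMap.norm_le _ (norm_nonneg k)).2 fun b => k.norm_coe_le_norm _

end IntegralSnd

section DelayedEval

variable {𝕜 I Ω P E : Type*} [NormedField 𝕜] [TopologicalSpace I] [CompactSpace I]
  [TopologicalSpace Ω] [CompactSpace Ω] [TopologicalSpace P] [CompactSpace P]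
  [NormedAddCommGroup E] [NormedSpace 𝕜 E]

noncomputable def delayedEval (σ : C(P, I)) (e : C(P, Ω)) : C(I, C(Ω, E)) →L[𝕜] C(P, E) :=
  LinearMap.mkContinuous
    { toFun := fun φ => ⟨fun p => φ (σ p) (e p), (φ.continuous.comp σ.continuous).eval e.continuous⟩
      map_add' := fun _ _ => rfl
      map_smul' := fun _ _ => rfl }
    1 fun φ => (ContinuousMap.norm_le _ (by positivity)).2 fun p =>
      ((φ (σ p)).norm_coe_le_norm (e p)).trans <| by
        rw [one_mul]; exact φ.norm_coe_le_norm (σ p)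

end DelayedEval

theorem isFiniteMeasure_lebOn {n : ℕ} {Ω : Set (EuclideanSpace ℝ (Fin n))} (hΩ : volume Ω < ⊤) :
    IsFiniteMeasure (lebOn Ω) where
  measure_univ_lt_top :=
    (Measure.comap_apply_le Subtype.val volume (s := univ) .univ).trans_lt <| by
      rwa [image_univ, Subtype.range_coe]

/-- The operator `G : X → Y` is Fréchet differentiable at every `φ ∈ X`,
with derivative `DG(φ) ∈ L(X,Y)` given by
`(DG(φ)ψ)(r) = ∫_{Ω̄} J(r,r')·S′(φ(−τ(r,r'))(r'))·ψ(−τ(r,r'))(r') dr'`. -/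
theorem stmt2
    {n : ℕ} {Ω : Set (EuclideanSpace ℝ (Fin n))} [CompactSpace Ω]
    (hΩfin : volume Ω < ⊤)
    {h : ℝ} (hh : 0 < h)
    (J : Ω → Ω → ℝ) (hJ : Continuous fun p : Ω × Ω => J p.1 p.2)
    (S : ℝ → ℝ) (hS : ContDiff ℝ (⊤ : ℕ∞) S)
    (hSbd : ∀ k : ℕ, ∃ C : ℝ, ∀ u : ℝ, |iteratedDeriv k S u| ≤ C)
    (τ : Ω → Ω → ℝ) (hτc : Continuous fun p : Ω × Ω => τ p.1 p.2)
    (G : C(Icc (-h) (0 : ℝ), C(Ω, ℝ)) → C(Ω, ℝ))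
    (hG : ∀ (φ : C(Icc (-h) (0 : ℝ), C(Ω, ℝ))) (r : Ω),
      G φ r = ∫ r' : Ω, J r r' * S (φ (projIcc (-h) 0 (by linarith) (-(τ r r'))) r')
        ∂(lebOn Ω)) :
    ∀ φ : C(Icc (-h) (0 : ℝ), C(Ω, ℝ)),
      ∃ D : C(Icc (-h) (0 : ℝ), C(Ω, ℝ)) →L[ℝ] C(Ω, ℝ),
        HasFDerivAt (𝕜 := ℝ) G D φ ∧
        ∀ (ψ : C(Icc (-h) (0 : ℝ), C(Ω, ℝ))) (r : Ω),
          D ψ r = ∫ r' : Ω,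
            J r r' * deriv S (φ (projIcc (-h) 0 (by linarith) (-(τ r r'))) r')
              * ψ (projIcc (-h) 0 (by linarith) (-(τ r r'))) r' ∂(lebOn Ω) := by
  intro φ
  have : IsFiniteMeasure (lebOn Ω) := isFiniteMeasure_lebOn hΩfin
  obtain ⟨C, hC⟩ := hSbd 2
  have hS' := lipschitzWith_deriv_of_abs_iteratedDeriv_two_le
    (hS.of_le (WithTop.coe_le_coe.2 le_top)) hC
  let s : C(ℝ, ℝ) := ⟨S, hS.continuous⟩
  have hh0 : -h ≤ 0 := by linarith
  let σ : C(Ω × Ω, Icc (-h) (0 : ℝ)) :=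
    ⟨fun p => projIcc (-h) 0 hh0 (-τ p.1 p.2), continuous_projIcc.comp hτc.neg⟩
  let delay := delayedEval (𝕜 := ℝ) (E := ℝ) σ .snd
  let K := integralSnd (lebOn Ω) ∘L
    ContinuousLinearMap.mul ℝ C(Ω × Ω, ℝ) ⟨fun p => J p.1 p.2, hJ⟩
  have hG_eq : G = K ∘ (fun v => s.comp v) ∘ delay := funext fun φ => ContinuousMap.ext (hG φ)
  have hD := K.hasFDerivAt.comp φ
    ((s.hasFDerivAt_comp_left (hS.differentiable (by simp)) hS' (delay φ)).comp φ delay.hasFDerivAt)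
  exact ⟨_, hG_eq ▸ hD, fun ψ r => integral_congr_ae (.of_forall fun r' => (mul_assoc _ _ _).symm)⟩
end

section
/- For every α > 0 and every initial condition φ ∈ X, the delayed neural field problem has a unique global solution: there exists a unique function V : [−h,∞) → Y which is continuous on [−h,∞), continuously differentiable on [0,∞), satisfies V(t) = φ(t) for all t ∈ [−h,0], and satisfies V′(t) = −α·V(t) + G(V_t) for all t ≥ 0, where V_t ∈ X denotes the history segment V_t(θ) := V(t+θ) for θ ∈ [−h,0]. -/
/-!
The equation `V' = -α V + G(V_t)` is a delay equation `V' = H(V_t)` whose right-hand side `H` is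
globally Lipschitz on the history space `C([-h,0], Y)`: `S` is Lipschitz (its derivative is
bounded), `J` is bounded and the compact set `Ω` has finite measure. For such equations the
Picard map is a contraction for the Bielecki norm `sup_t e^{-γt} ‖V t‖` with `γ = K + 1`, which
gives a global solution; the same weighted estimate, taken over a compact time interval, gives
uniqueness.
-/

open MeasureTheory Set

open Real BoundedContinuousFunction

section History

variable {Y : Type*} [TopologicalSpace Y]

def history (h : ℝ) (V : C(ℝ, Y)) (t : ℝ) : C(Icc (-h) 0, Y) :=
  V.comp ⟨fun θ => t + θ, by fun_prop⟩

@[simp]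
lemma history_apply (h : ℝ) (V : C(ℝ, Y)) (t : ℝ) (θ : Icc (-h) 0) :
    history h V t θ = V (t + θ) :=
  rfl

lemma continuous_history (h : ℝ) (V : C(ℝ, Y)) : Continuous (history h V) :=
  (ContinuousMap.curry ⟨fun p : ℝ × Icc (-h) 0 => V (p.1 + p.2), by fun_prop⟩).continuous

end History

lemma dist_history_le {Y : Type*} [PseudoMetricSpace Y] {h γ d t s : ℝ} (hγ : 0 ≤ γ)
    (hd : 0 ≤ d) {V W : C(ℝ, Y)} (hVW : ∀ u ∈ Icc (-h) t, dist (V u) (W u) ≤ d * exp (γ * u))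
    (hs : s ∈ Icc 0 t) : dist (history h V s) (history h W s) ≤ d * exp (γ * s) := by
  have hVW' : ∀ θ : Icc (-h) 0, dist (V (s + θ)) (W (s + θ)) ≤ d * exp (γ * (s + θ)) :=
    fun θ => hVW _ ⟨by linarith [θ.2.1, hs.1], by linarith [θ.2.2, hs.2]⟩
  refine (ContinuousMap.dist_le (by positivity)).2 fun θ => (hVW' θ).trans ?_
  have hθ : (θ : ℝ) ≤ 0 := θ.2.2
  gcongr
  nlinarith

section DelayEquation

variable {Y : Type*} [NormedAddCommGroup Y] [NormedSpace ℝ Y]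

lemma norm_integral_le_of_norm_le_exp {f : ℝ → Y} {A γ t : ℝ}
    (hγ : 0 < γ) (ht : 0 ≤ t) (hfA : ∀ s ∈ Icc 0 t, ‖f s‖ ≤ A * exp (γ * s)) :
    ‖∫ s in 0..t, f s‖ ≤ A / γ * exp (γ * t) := by
  have hA : 0 ≤ A := by simpa using (norm_nonneg _).trans (hfA 0 ⟨le_rfl, ht⟩)
  calc ‖∫ s in 0..t, f s‖ ≤ ∫ s in 0..t, A * exp (γ * s) :=
        intervalIntegral.norm_integral_le_of_norm_le ht
          (Filter.Eventually.of_forall fun s hs => hfA s (Ioc_subset_Icc_self hs))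
          ((by fun_prop : Continuous fun s => A * exp (γ * s)).intervalIntegrable _ _)
    _ = A / γ * (exp (γ * t) - 1) := by
        rw [intervalIntegral.integral_const_mul, intervalIntegral.integral_comp_mul_left _ hγ.ne',
          integral_exp]
        simp only [mul_zero, exp_zero, smul_eq_mul, div_eq_mul_inv]
        ring
    _ ≤ A / γ * exp (γ * t) := by gcongr; linarith

lemma dist_integral_history_le {h : ℝ} {H : C(Icc (-h) 0, Y) → Y} {K : NNReal}
    (hH : LipschitzWith K H) {V W : C(ℝ, Y)} {γ d t : ℝ} (hγ : 0 < γ) (hd : 0 ≤ d) (ht : 0 ≤ t)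
    (hVW : ∀ u ∈ Icc (-h) t, dist (V u) (W u) ≤ d * exp (γ * u)) :
    dist (∫ s in 0..t, H (history h V s)) (∫ s in 0..t, H (history h W s))
      ≤ K * d / γ * exp (γ * t) := by
  have hV : Continuous fun s => H (history h V s) := hH.continuous.comp (continuous_history h V)
  have hW : Continuous fun s => H (history h W s) := hH.continuous.comp (continuous_history h W)
  rw [dist_eq_norm, ← intervalIntegral.integral_sub (hV.intervalIntegrable _ _)
    (hW.intervalIntegrable _ _)]
  refine norm_integral_le_of_norm_le_exp hγ ht fun s hs => ?_
  rw [← dist_eq_norm, mul_assoc]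
  exact (hH.dist_le_mul _ _).trans
    (mul_le_mul_of_nonneg_left (dist_history_le hγ.le hd hVW hs) K.2)

theorem eqOn_of_eq_add_integral_history {h : ℝ} (hh : -h ≤ 0) {H : C(Icc (-h) 0, Y) → Y}
    {K : NNReal} (hH : LipschitzWith K H) {V W : C(ℝ, Y)} (hVW : EqOn V W (Icc (-h) 0))
    (hV : ∀ t ≥ 0, V t = V 0 + ∫ s in 0..t, H (history h V s))
    (hW : ∀ t ≥ 0, W t = W 0 + ∫ s in 0..t, H (history h W s)) : EqOn V W (Ici (-h)) := by
  intro t₀ ht₀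
  rcases le_or_gt t₀ 0 with ht₀0 | ht₀0
  · exact hVW ⟨ht₀, ht₀0⟩
  set γ : ℝ := K + 1
  have hγ : 0 < γ := by positivity
  set g : ℝ → ℝ := fun t => dist (V t) (W t) / exp (γ * t)
  have hg : Continuous g := (V.continuous.dist W.continuous).div (by fun_prop)
    fun _ => (exp_pos _).ne'
  obtain ⟨m, hm, hmax⟩ := isCompact_Icc.exists_isMaxOn (nonempty_Icc.2 ht₀0.le) hg.continuousOn
  have hgm : 0 ≤ g m := div_nonneg dist_nonneg (exp_pos _).le
  have hbound : ∀ u ∈ Icc (-h) t₀, dist (V u) (W u) ≤ g m * exp (γ * u) := by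
    intro u hu
    rcases le_or_gt u 0 with hu0 | hu0
    · rw [hVW ⟨hu.1, hu0⟩, dist_self]
      positivity
    · exact (div_le_iff₀ (exp_pos _)).1 (hmax ⟨hu0.le, hu.2⟩)
  have hcontr : g m ≤ K / γ * g m := by
    rw [div_le_iff₀ (exp_pos _)]
    calc dist (V m) (W m)
        = dist (∫ s in 0..m, H (history h V s)) (∫ s in 0..m, H (history h W s)) := by
          rw [hV m hm.1, hW m hm.1, hVW ⟨hh, le_rfl⟩, dist_add_left]
      _ ≤ K * g m / γ * exp (γ * m) :=
          dist_integral_history_le hH hγ hgm hm.1 fun u hu => hbound u ⟨hu.1, hu.2.trans hm.2⟩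
      _ = K / γ * g m * exp (γ * m) := by ring
  have hKγ : (K : ℝ) / γ < 1 := by rw [div_lt_one hγ]; linarith
  have hm0 : g m = 0 := by nlinarith
  simpa [hm0] using hbound t₀ ⟨ht₀, le_rfl⟩

section Bielecki

variable {h : ℝ} (hh : -h ≤ 0) (H : C(Icc (-h) 0, Y) → Y) (φ : C(Icc (-h) 0, Y)) (γ : ℝ)

-- `dist w₁ w₂` is the Bielecki distance `sup_t e^{-γt} ‖V₁ t - V₂ t‖` of the lifts; a fixed point
-- of `bieleckiPicard` vanishes for `t ≤ 0` and lifts to a solution of the integral equation.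
noncomputable def bieleckiLift (w : ℝ →ᵇ Y) : C(ℝ, Y) :=
  ⟨fun t => IccExtend hh φ t + exp (γ * t) • w t, by fun_prop⟩

noncomputable def bieleckiPicard (w : ℝ →ᵇ Y) (t : ℝ) : Y :=
  exp (-(γ * max t 0)) • ∫ s in 0..max t 0, H (history h (bieleckiLift hh φ γ w) s)

variable {hh H φ γ} {K : NNReal}

lemma dist_bieleckiLift_le (w₁ w₂ : ℝ →ᵇ Y) (u : ℝ) :
    dist (bieleckiLift hh φ γ w₁ u) (bieleckiLift hh φ γ w₂ u) ≤ dist w₁ w₂ * exp (γ * u) := by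
  simp only [bieleckiLift, ContinuousMap.coe_mk, dist_add_left, dist_smul₀, norm_eq_abs, abs_exp]
  rw [mul_comm]
  gcongr
  exact w₁.dist_coe_le_dist u

lemma dist_bieleckiPicard_le (hH : LipschitzWith K H) (hγ : 0 < γ)
    (w₁ w₂ : ℝ →ᵇ Y) (t : ℝ) :
    dist (bieleckiPicard hh H φ γ w₁ t) (bieleckiPicard hh H φ γ w₂ t) ≤ K / γ * dist w₁ w₂ := by
  rw [bieleckiPicard, bieleckiPicard, dist_smul₀, norm_eq_abs, abs_exp]
  calc exp (-(γ * max t 0)) * dist (∫ s in 0..max t 0, H (history h (bieleckiLift hh φ γ w₁) s))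
        (∫ s in 0..max t 0, H (history h (bieleckiLift hh φ γ w₂) s))
      ≤ exp (-(γ * max t 0)) * (K * dist w₁ w₂ / γ * exp (γ * max t 0)) := by
        gcongr
        exact dist_integral_history_le hH hγ dist_nonneg (le_max_right t 0)
          fun u _ => dist_bieleckiLift_le w₁ w₂ u
    _ = K / γ * dist w₁ w₂ := by
        rw [exp_neg]
        field_simp

lemma continuous_bieleckiPicard (hH : Continuous H) (w : ℝ →ᵇ Y) :
    Continuous (bieleckiPicard hh H φ γ w) := by
  have := intervalIntegral.continuous_primitive (fun a b =>
    (hH.comp (continuous_history h (bieleckiLift hh φ γ w))).intervalIntegrable (μ := volume) a b) 0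
  unfold bieleckiPicard
  fun_prop

lemma norm_bieleckiPicard_zero_le (hH : LipschitzWith K H) (hγ : 0 < γ) (t : ℝ) :
    ‖bieleckiPicard hh H φ γ 0 t‖ ≤ (‖H 0‖ + K * ‖φ‖) / γ := by
  have hφ : ∀ s, ‖history h (bieleckiLift hh φ γ 0) s‖ ≤ ‖φ‖ := fun s =>
    (ContinuousMap.norm_le _ (norm_nonneg _)).2 fun θ => by
      simpa [bieleckiLift, IccExtend] using φ.norm_coe_le_norm _
  have hF : ∀ s ∈ Icc 0 (max t 0),
      ‖H (history h (bieleckiLift hh φ γ 0) s)‖ ≤ (‖H 0‖ + K * ‖φ‖) * exp (γ * s) := by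
    intro s hs
    calc ‖H (history h (bieleckiLift hh φ γ 0) s)‖ ≤ ‖H 0‖ + K * ‖φ‖ :=
          norm_le_norm_add_const_of_dist_le
            ((hH.dist_le_mul _ 0).trans (by rw [dist_zero_right]; gcongr; exact hφ s))
      _ ≤ (‖H 0‖ + K * ‖φ‖) * exp (γ * s) :=
          le_mul_of_one_le_right (by positivity) (one_le_exp (by nlinarith [hs.1]))
  rw [bieleckiPicard, norm_smul, norm_eq_abs, abs_exp]
  calc exp (-(γ * max t 0)) * ‖∫ s in 0..max t 0, H (history h (bieleckiLift hh φ γ 0) s)‖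
      ≤ exp (-(γ * max t 0)) * ((‖H 0‖ + K * ‖φ‖) / γ * exp (γ * max t 0)) := by
        gcongr
        exact norm_integral_le_of_norm_le_exp hγ (le_max_right _ _) hF
    _ = (‖H 0‖ + K * ‖φ‖) / γ := by
        rw [exp_neg]
        field_simp

lemma norm_bieleckiPicard_le (hH : LipschitzWith K H) (hγ : 0 < γ) (w : ℝ →ᵇ Y) (t : ℝ) :
    ‖bieleckiPicard hh H φ γ w t‖ ≤ (‖H 0‖ + K * ‖φ‖) / γ + K / γ * ‖w‖ := by
  refine norm_le_norm_add_const_of_dist_le ((dist_bieleckiPicard_le hH hγ w 0 t).trans_eq ?_)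
    |>.trans (add_le_add_left (norm_bieleckiPicard_zero_le hH hγ t) _)
  rw [dist_zero_right]

end Bielecki

variable [CompleteSpace Y]

lemma eq_add_integral_of_hasDerivWithinAt {V : C(ℝ, Y)} {F : ℝ → Y} (hF : Continuous F)
    (hV : ∀ t ≥ 0, HasDerivWithinAt V (F t) (Ici 0) t) {t : ℝ} (ht : 0 ≤ t) :
    V t = V 0 + ∫ s in 0..t, F s := by
  rw [intervalIntegral.integral_eq_sub_of_hasDeriv_right_of_le ht V.continuous.continuousOn
    (fun s hs => (hV s hs.1.le).mono (Ioi_subset_Ici hs.1.le)) (hF.intervalIntegrable _ _)]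
  abel

theorem exists_eq_add_integral_history {h : ℝ} (hh : -h ≤ 0) {H : C(Icc (-h) 0, Y) → Y}
    {K : NNReal} (hH : LipschitzWith K H) (φ : C(Icc (-h) 0, Y)) :
    ∃ V : C(ℝ, Y), (∀ t (ht : t ∈ Icc (-h) 0), V t = φ ⟨t, ht⟩) ∧
      ∀ t ≥ 0, V t = V 0 + ∫ s in 0..t, H (history h V s) := by
  set γ : ℝ := K + 1
  have hγ : 0 < γ := by positivity
  let Φ : (ℝ →ᵇ Y) → (ℝ →ᵇ Y) := fun w =>
    ofNormedAddCommGroup (bieleckiPicard hh H φ γ w) (continuous_bieleckiPicard hH.continuous w)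
      _ (norm_bieleckiPicard_le hH hγ w)
  have hΦ : ContractingWith (K / (K + 1)) Φ := by
    have hc : ((K / (K + 1) : NNReal) : ℝ) = K / γ := by simp [γ]
    refine ⟨by rw [div_lt_one (by positivity)]; exact lt_add_one K,
      LipschitzWith.of_dist_le_mul fun w₁ w₂ => ?_⟩
    rw [hc]
    exact (BoundedContinuousFunction.dist_le (by positivity)).2
      fun t => dist_bieleckiPicard_le hH hγ w₁ w₂ t
  set w := hΦ.fixedPoint Φ
  have hw : ∀ t, w t = bieleckiPicard hh H φ γ w t :=
    fun t => congrArg (· t) hΦ.fixedPoint_isFixedPt.symm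
  refine ⟨bieleckiLift hh φ γ w, fun t ht => ?_, fun t ht => ?_⟩
  · simp [bieleckiLift, hw t, bieleckiPicard, max_eq_right ht.2, IccExtend_of_mem hh φ ht]
  · simp [bieleckiLift, hw t, hw 0, bieleckiPicard, max_eq_left ht, smul_smul, ← exp_add,
      IccExtend_of_right_le (h := hh) φ ht]

theorem exists_hasDerivWithinAt_history {h : ℝ} (hh : -h ≤ 0) {H : C(Icc (-h) 0, Y) → Y}
    {K : NNReal} (hH : LipschitzWith K H) (φ : C(Icc (-h) 0, Y)) :
    ∃ V : C(ℝ, Y), (∀ t (ht : t ∈ Icc (-h) 0), V t = φ ⟨t, ht⟩) ∧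
      ∀ t ≥ 0, HasDerivWithinAt V (H (history h V t)) (Ici 0) t := by
  obtain ⟨V, hV0, hV⟩ := exists_eq_add_integral_history hh hH φ
  refine ⟨V, hV0, fun t ht => ?_⟩
  have hF : Continuous fun s => H (history h V s) := hH.continuous.comp (continuous_history h V)
  exact (((intervalIntegral.integral_hasDerivAt_right (hF.intervalIntegrable 0 t)
    (hF.stronglyMeasurableAtFilter _ _) hF.continuousAt).const_add (V 0)).hasDerivWithinAt).congr
      (fun s hs => hV s hs) (hV t ht)

theorem eqOn_of_hasDerivWithinAt_history {h : ℝ} (hh : -h ≤ 0) {H : C(Icc (-h) 0, Y) → Y}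
    {K : NNReal} (hH : LipschitzWith K H) {V W : C(ℝ, Y)} (hVW : EqOn V W (Icc (-h) 0))
    (hV : ∀ t ≥ 0, HasDerivWithinAt V (H (history h V t)) (Ici 0) t)
    (hW : ∀ t ≥ 0, HasDerivWithinAt W (H (history h W t)) (Ici 0) t) : EqOn V W (Ici (-h)) :=
  eqOn_of_eq_add_integral_history hh hH hVW
    (fun _ => eq_add_integral_of_hasDerivWithinAt (hH.continuous.comp (continuous_history h V)) hV)
    (fun _ => eq_add_integral_of_hasDerivWithinAt (hH.continuous.comp (continuous_history h W)) hW)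

end DelayEquation

section NeuralField

variable {Ω : Type*} [TopologicalSpace Ω] [MeasurableSpace Ω]

def IsDelayedFieldOperator (μ : Measure Ω) (J τ : Ω → Ω → ℝ) (S : ℝ → ℝ)
    (G : (ℝ → C(Ω, ℝ)) → C(Ω, ℝ)) : Prop :=
  ∀ (u : ℝ → C(Ω, ℝ)) (r : Ω), G u r = ∫ r', J r r' * S (u (-(τ r r')) r') ∂μ

variable {μ : Measure Ω} {J τ : Ω → Ω → ℝ} {S : ℝ → ℝ} {G : (ℝ → C(Ω, ℝ)) → C(Ω, ℝ)} {h : ℝ}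

lemma IsDelayedFieldOperator.congr (hG : IsDelayedFieldOperator μ J τ S G)
    (hτ : ∀ r r', τ r r' ∈ Icc 0 h) {u v : ℝ → C(Ω, ℝ)} (huv : EqOn u v (Icc (-h) 0)) :
    G u = G v := by
  ext r
  rw [hG, hG]
  congr 1 with r'
  rw [huv ⟨neg_le_neg (hτ r r').2, neg_nonpos.2 (hτ r r').1⟩]

lemma IsDelayedFieldOperator.exists_lipschitzWith [CompactSpace Ω] [OpensMeasurableSpace Ω]
    [IsFiniteMeasure μ] (hG : IsDelayedFieldOperator μ J τ S G)
    (hJ : Continuous fun p : Ω × Ω => J p.1 p.2) {L : NNReal} (hS : LipschitzWith L S)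
    (hτ : Continuous fun p : Ω × Ω => τ p.1 p.2) (hh : -h ≤ 0) :
    ∃ K, LipschitzWith K fun u : C(Icc (-h) 0, C(Ω, ℝ)) => G (IccExtend hh u) := by
  set M := ‖(⟨_, hJ⟩ : C(Ω × Ω, ℝ))‖
  have hJM : ∀ r r', ‖J r r'‖ ≤ M := fun r r' =>
    (ContinuousMap.mk _ hJ).norm_coe_le_norm (r, r')
  have hint : ∀ (u : C(Icc (-h) 0, C(Ω, ℝ))) r,
      Integrable (fun r' => J r r' * S (IccExtend hh u (-τ r r') r')) μ := fun u r =>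
    Continuous.integrable_of_hasCompactSupport
      (by have := hS.continuous; fun_prop) (HasCompactSupport.of_compactSpace _)
  refine ⟨_, LipschitzWith.of_dist_le' (K := M * L * μ.real univ) fun u v => ?_⟩
  refine (ContinuousMap.dist_le (by positivity)).2 fun r => ?_
  rw [dist_eq_norm, hG, hG, ← integral_sub (hint u r) (hint v r)]
  refine (norm_integral_le_of_norm_le_const (C := M * L * dist u v)
    (Filter.Eventually.of_forall fun r' => ?_)).trans_eq (by ring)
  rw [← mul_sub, norm_mul, ← dist_eq_norm, mul_assoc]
  gcongr
  · exact hJM r r'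
  refine (hS.dist_le_mul _ _).trans ?_
  gcongr
  exact (ContinuousMap.dist_apply_le_dist r').trans (ContinuousMap.dist_apply_le_dist _)

end NeuralField

instance isFiniteMeasure_lebOn_s4 {n : ℕ} (Ω : Set (EuclideanSpace ℝ (Fin n))) [CompactSpace Ω] :
    IsFiniteMeasure (lebOn Ω) :=
  ⟨(Measure.comap_apply_le _ _ nullMeasurableSet_univ).trans_lt <| by
    simpa using (isCompact_range (continuous_subtype_val (p := (· ∈ Ω)))).measure_lt_top⟩

lemma lipschitzWith_of_abs_deriv_le {S : ℝ → ℝ} (hS : Differentiable ℝ S) {C : ℝ}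
    (hC : ∀ u, |deriv S u| ≤ C) : LipschitzWith C.toNNReal S :=
  lipschitzWith_of_nnnorm_deriv_le hS fun u => by
    rw [← NNReal.coe_le_coe, coe_nnnorm, Real.coe_toNNReal _ ((abs_nonneg _).trans (hC u))]
    exact hC u

section DelayRHS

variable {Y : Type*} [NormedAddCommGroup Y] [NormedSpace ℝ Y] {h : ℝ} (hh : -h ≤ 0)

noncomputable def delayRHS (α : ℝ) (G : (ℝ → Y) → Y) (u : C(Icc (-h) 0, Y)) : Y :=
  (-α) • u ⟨0, hh, le_rfl⟩ + G (IccExtend hh u)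

lemma exists_lipschitzWith_delayRHS (α : ℝ) {G : (ℝ → Y) → Y} {K : NNReal}
    (hG : LipschitzWith K fun u : C(Icc (-h) 0, Y) => G (IccExtend hh u)) :
    ∃ K', LipschitzWith K' (delayRHS hh α G) :=
  ⟨_, ((-α) • ContinuousMap.evalCLM ℝ (⟨0, hh, le_rfl⟩ : Icc (-h) 0)).lipschitz.add hG⟩

lemma delayRHS_history (α : ℝ) {G : (ℝ → Y) → Y}
    (hG : ∀ u v, EqOn u v (Icc (-h) 0) → G u = G v) {U : C(ℝ, Y)} {W : ℝ → Y}
    (hUW : EqOn U W (Ici (-h))) {t : ℝ} (ht : 0 ≤ t) :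
    delayRHS hh α G (history h U t) = (-α) • W t + G fun θ => W (t + θ) := by
  refine congrArg₂ _ ?_ (hG _ _ fun θ hθ => ?_)
  · simp [hUW (show -h ≤ t by linarith)]
  · simp only [IccExtend_of_mem hh _ hθ, history_apply]
    exact hUW (show -h ≤ t + θ by linarith [hθ.1])

end DelayRHS

theorem stmt4_general
    {n : ℕ} {Ω : Set (EuclideanSpace ℝ (Fin n))} [CompactSpace Ω]
    {h : ℝ} (hh : 0 < h)
    (J : Ω → Ω → ℝ) (hJ : Continuous fun p : Ω × Ω => J p.1 p.2)
    (S : ℝ → ℝ) (hS : ContDiff ℝ (⊤ : ℕ∞) S)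
    (hSbd : ∀ k : ℕ, ∃ C : ℝ, ∀ u : ℝ, |iteratedDeriv k S u| ≤ C)
    (τ : Ω → Ω → ℝ) (hτc : Continuous fun p : Ω × Ω => τ p.1 p.2)
    (hτ : ∀ r r' : Ω, τ r r' ∈ Icc 0 h)
    (G : (ℝ → C(Ω, ℝ)) → C(Ω, ℝ))
    (hG : ∀ (u : ℝ → C(Ω, ℝ)) (r : Ω),
      G u r = ∫ r' : Ω, J r r' * S (u (-(τ r r')) r') ∂(lebOn Ω))
    (α : ℝ)
    (φ : ℝ → C(Ω, ℝ)) (hφ : ContinuousOn φ (Icc (-h) 0)) :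
    ∃ V : ℝ → C(Ω, ℝ),
      (ContinuousOn V (Ici (-h)) ∧
        (∀ t ∈ Icc (-h) (0 : ℝ), V t = φ t) ∧
        (∀ t ∈ Ici (0 : ℝ),
          HasDerivWithinAt V ((-α) • V t + G fun θ => V (t + θ)) (Ici 0) t) ∧
        ContinuousOn (fun t => (-α) • V t + G fun θ => V (t + θ)) (Ici 0)) ∧
      ∀ W : ℝ → C(Ω, ℝ),
        (ContinuousOn W (Ici (-h)) ∧
          (∀ t ∈ Icc (-h) (0 : ℝ), W t = φ t) ∧
          (∀ t ∈ Ici (0 : ℝ),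
            HasDerivWithinAt W ((-α) • W t + G fun θ => W (t + θ)) (Ici 0) t) ∧
          ContinuousOn (fun t => (-α) • W t + G fun θ => W (t + θ)) (Ici 0)) →
        EqOn W V (Ici (-h)) := by
  have hh' : -h ≤ 0 := by linarith
  obtain ⟨C, hC⟩ := hSbd 1
  have hSL := lipschitzWith_of_abs_deriv_le (hS.differentiable (by simp)) (by simpa using hC)
  obtain ⟨KG, hKG⟩ := IsDelayedFieldOperator.exists_lipschitzWith hG hJ hSL hτc hh'
  obtain ⟨K, hK⟩ := exists_lipschitzWith_delayRHS hh' α hKG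
  have hGc : ∀ u v, EqOn u v (Icc (-h) 0) → G u = G v := fun _ _ =>
    IsDelayedFieldOperator.congr hG hτ
  obtain ⟨V, hVφ, hV⟩ := exists_hasDerivWithinAt_history hh' hK ⟨_, hφ.domRestrict⟩
  refine ⟨V, ⟨V.continuous.continuousOn, fun t ht => hVφ t ht, fun t ht => ?_, ?_⟩, ?_⟩
  · rw [← delayRHS_history hh' α hGc (eqOn_refl _ _) ht]
    exact hV t ht
  · exact (hK.continuous.comp (continuous_history h V)).continuousOn.congr
      fun t ht => (delayRHS_history hh' α hGc (eqOn_refl _ _) ht).symm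
  · rintro W ⟨hWc, hWφ, hW, -⟩
    let W' : C(ℝ, C(Ω, ℝ)) := ⟨fun t => W (max t (-h)),
      hWc.comp_continuous (continuous_id.max continuous_const) fun t => le_max_right t (-h)⟩
    have hW'W : EqOn W' W (Ici (-h)) := fun t ht => congrArg W (max_eq_left ht)
    have hW' : ∀ t ≥ 0, HasDerivWithinAt W' (delayRHS hh' α G (history h W' t)) (Ici 0) t := by
      intro t ht
      rw [delayRHS_history hh' α hGc hW'W ht]
      exact (hW t ht).congr (fun s hs => hW'W (hh'.trans hs)) (hW'W (hh'.trans ht))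
    exact hW'W.symm.trans <| eqOn_of_hasDerivWithinAt_history hh' hK
      (fun t ht => (hW'W ht.1).trans ((hWφ t ht).trans (hVφ t ht).symm)) hW' hV

/-- For every `α > 0` and every initial condition `φ ∈ X`, the delayed
neural field problem has a unique global solution `V : [−h,∞) → Y`: `V` is continuous on
`[−h,∞)`, continuously differentiable on `[0,∞)`, `V(t) = φ(t)` on `[−h,0]`, and
`V′(t) = −α·V(t) + G(V_t)` for `t ≥ 0`, where `V_t(θ) = V(t+θ)`. -/
theorem stmt4
    {n : ℕ} {Ω : Set (EuclideanSpace ℝ (Fin n))} [CompactSpace Ω]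
    (hΩmeas : MeasurableSet Ω) (hΩpos : 0 < volume Ω) (hΩfin : volume Ω < ⊤)
    {h : ℝ} (hh : 0 < h)
    (J : Ω → Ω → ℝ) (hJ : Continuous fun p : Ω × Ω => J p.1 p.2)
    (S : ℝ → ℝ) (hS : ContDiff ℝ (⊤ : ℕ∞) S)
    (hSbd : ∀ k : ℕ, ∃ C : ℝ, ∀ u : ℝ, |iteratedDeriv k S u| ≤ C)
    (τ : Ω → Ω → ℝ) (hτc : Continuous fun p : Ω × Ω => τ p.1 p.2)
    (hτ : ∀ r r' : Ω, τ r r' ∈ Icc 0 h)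
    (G : (ℝ → C(Ω, ℝ)) → C(Ω, ℝ))
    (hG : ∀ (u : ℝ → C(Ω, ℝ)) (r : Ω),
      G u r = ∫ r' : Ω, J r r' * S (u (-(τ r r')) r') ∂(lebOn Ω))
    (α : ℝ) (hα : 0 < α)
    (φ : ℝ → C(Ω, ℝ)) (hφ : ContinuousOn φ (Icc (-h) 0)) :
    ∃ V : ℝ → C(Ω, ℝ),
      (ContinuousOn V (Ici (-h)) ∧
        (∀ t ∈ Icc (-h) (0 : ℝ), V t = φ t) ∧
        (∀ t ∈ Ici (0 : ℝ),
          HasDerivWithinAt V ((-α) • V t + G fun θ => V (t + θ)) (Ici 0) t) ∧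
        ContinuousOn (fun t => (-α) • V t + G fun θ => V (t + θ)) (Ici 0)) ∧
      ∀ W : ℝ → C(Ω, ℝ),
        (ContinuousOn W (Ici (-h)) ∧
          (∀ t ∈ Icc (-h) (0 : ℝ), W t = φ t) ∧
          (∀ t ∈ Ici (0 : ℝ),
            HasDerivWithinAt W ((-α) • W t + G fun θ => W (t + θ)) (Ici 0) t) ∧
          ContinuousOn (fun t => (-α) • W t + G fun θ => W (t + θ)) (Ici 0)) →
        EqOn W V (Ici (-h)) :=
  stmt4_general hh J hJ S hS hSbd τ hτc hτ G hG α φ hφ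
end

section
/- Let z ∈ ℂ with z ≠ −α, and suppose that the operator L_z ∈ L(Y), defined by L_z y := L(θ ↦ e^{zθ}·y), is compact. Then the range of z − A is closed in X; that is, the set { z·φ − φ′ : φ ∈ C¹([−h,0],Y) with φ′(0) = −α·φ(0) + Lφ } is a closed subset of X. -/
open Set

/-- The continuous map `θ ↦ e^{zθ}·y` on `[-h,0]`, for `y` in a complex normed space. -/
noncomputable def expTensor {Y : Type*} [NormedAddCommGroup Y] [NormedSpace ℂ Y]
    (h : ℝ) (z : ℂ) (y : Y) : C(Set.Icc (-h) (0 : ℝ), Y) :=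
  ⟨fun θ => Complex.exp (z * ((θ : ℝ) : ℂ)) • y, by fun_prop⟩

/-!
Every solution of `z φ - φ' = ψ` on `[-h, 0]` is, by variation of constants,
`φ = e_z y + G ψ` with `y = φ 0`, `e_z y = θ ↦ e^{zθ} y` and
`(G ψ)(θ) = e^{zθ} ∫_θ^0 e^{-zs} ψ(s) ds`. The boundary condition then reads
`(z + α) y - L_z y = ψ 0 + L (G ψ)`, so the range of `z - A` is the preimage of the range of
`(z + α) - L_z` under the continuous map `ψ ↦ ψ 0 + L (G ψ)`. That range is closed by the Riesz
theory of the compact operator `L_z` at the nonzero point `z + α`: the kernel is finite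
dimensional, and on a closed complement of it the operator is bounded below.
-/

open Filter Topology

namespace IsCompactOperator

variable {𝕜 E : Type*} [RCLike 𝕜] [NormedAddCommGroup E] [NormedSpace 𝕜 E]
  {T : E →L[𝕜] E} {μ : 𝕜}

theorem finiteDimensional_ker_sub_smul_one (hT : IsCompactOperator T) (hμ : μ ≠ 0) :
    FiniteDimensional 𝕜 (T - μ • 1).ker := by
  have hTN : ∀ x ∈ (T - μ • 1).ker, T x = μ • x := fun x hx => by
    simpa [sub_eq_zero] using hx
  have hmaps : ∀ x ∈ (T - μ • 1).ker, (T : E →ₗ[𝕜] E) x ∈ (T - μ • 1).ker := fun x hx => by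
    simp only [ContinuousLinearMap.coe_coe, hTN x hx]
    exact Submodule.smul_mem _ μ hx
  have hrestrict : (T : E →ₗ[𝕜] E).restrict hmaps = μ • LinearMap.id := by
    ext x
    exact hTN x x.2
  have hcpt := hT.restrict hmaps (T - μ • 1).isClosed_ker
  rw [hrestrict, LinearMap.coe_smul, LinearMap.id_coe, IsCompactOperator.smul_iff₀ hμ] at hcpt
  exact FiniteDimensional.of_isCompactOperator_id hcpt

theorem exists_antilipschitzWith_comp_subtypeL (hT : IsCompactOperator T) (hμ : μ ≠ 0)
    {M : Submodule 𝕜 E} (hM : IsClosed (M : Set E)) (hMker : Disjoint M (T - μ • 1).ker) :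
    ∃ K, AntilipschitzWith K ((T - μ • 1).comp M.subtypeL) := by
  rw [antilipschitzWith_iff_exists_mul_le_norm]
  by_contra! hsmall
  have hunit : ∀ n : ℕ, ∃ x ∈ M, ‖x‖ = 1 ∧ ‖(T - μ • 1) x‖ < 1 / (n + 1) := by
    intro n
    obtain ⟨x, hx⟩ := hsmall (1 / (n + 1)) (by positivity)
    have hx0 : 0 < ‖x‖ := norm_pos_iff.2 (by rintro rfl; simp at hx)
    refine ⟨((‖x‖⁻¹ : ℝ) : 𝕜) • x, M.smul_mem _ x.2, ?_, ?_⟩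
    · simpa [norm_smul] using inv_mul_cancel₀ hx0.ne'
    · rw [map_smul, norm_smul, RCLike.norm_ofReal, abs_inv, abs_norm, inv_mul_lt_iff₀ hx0]
      simpa [mul_comm] using hx
  choose x hxM hx1 hxT using hunit
  obtain ⟨C, hC, hTC⟩ := hT.image_closedBall_subset_compact 1
  obtain ⟨w, -, φ, hφ, hw⟩ :=
    hC.tendsto_subseq (x := fun n => T (x n)) fun n => hTC ⟨x n, by simp [hx1], rfl⟩
  have hsub : Tendsto (fun n => (T - μ • 1) (x n)) atTop (𝓝 0) :=
    squeeze_zero_norm (fun n => (hxT n).le) tendsto_one_div_add_atTop_nhds_zero_nat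
  -- `x = μ⁻¹ • (T x - (T - μ • 1) x)`, and both terms converge along `φ`
  have hxlim : Tendsto (x ∘ φ) atTop (𝓝 (μ⁻¹ • w)) := by
    have := (hw.sub (hsub.comp hφ.tendsto_atTop)).const_smul μ⁻¹
    refine (this.congr fun n => ?_).trans (by rw [sub_zero])
    simp [hμ]
  have hlimM : μ⁻¹ • w ∈ M := hM.mem_of_tendsto hxlim (Eventually.of_forall fun n => hxM _)
  have hlimker : μ⁻¹ • w ∈ (T - μ • 1).ker :=
    tendsto_nhds_unique (((T - μ • 1).continuous.tendsto _).comp hxlim)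
      (hsub.comp hφ.tendsto_atTop)
  have hnorm : ‖μ⁻¹ • w‖ = 1 :=
    tendsto_nhds_unique hxlim.norm (by simp [hx1])
  simp [Submodule.disjoint_def.1 hMker _ hlimM hlimker] at hnorm

theorem isClosed_range_sub_smul_one [CompleteSpace E] (hT : IsCompactOperator T) (hμ : μ ≠ 0) :
    IsClosed (Set.range (T - μ • 1 : E →L[𝕜] E)) := by
  have := hT.finiteDimensional_ker_sub_smul_one hμ
  obtain ⟨M, hM, hcompl⟩ :=
    (Submodule.ClosedComplemented.of_finiteDimensional (T - μ • 1).ker).exists_isClosed_isCompl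
  obtain ⟨K, hK⟩ := hT.exists_antilipschitzWith_comp_subtypeL hμ hM hcompl.symm.disjoint
  have : CompleteSpace M := hM.completeSpace_coe
  have hrange : Set.range (T - μ • 1 : E →L[𝕜] E) = Set.range ((T - μ • 1).comp M.subtypeL) := by
    refine (Set.range_comp_subset_range _ _).antisymm' ?_
    rintro _ ⟨x, rfl⟩
    obtain ⟨n, hn, m, hm, rfl⟩ :=
      Submodule.mem_sup.1 (hcompl.sup_eq_top ▸ Submodule.mem_top (x := x))
    refine ⟨⟨m, hm⟩, ?_⟩
    change (T - μ • 1) m = (T - μ • 1) (n + m)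
    rw [map_add, show (T - μ • 1) n = 0 from hn, zero_add]
  rw [hrange]
  exact hK.isClosed_range (ContinuousLinearMap.uniformContinuous _)

end IsCompactOperator

section VariationOfConstants

variable {E : Type*} [NormedAddCommGroup E] [NormedSpace ℂ E] {z : ℂ}

noncomputable def variationOfConstants (z : ℂ) (g : ℝ → E) (y : E) (t : ℝ) : E :=
  Complex.exp (z * t) • (y + ∫ s in t..0, Complex.exp (-z * s) • g s)

@[simp]
theorem variationOfConstants_zero (g : ℝ → E) (y : E) : variationOfConstants z g y 0 = y := by
  simp [variationOfConstants]

theorem hasDerivAt_cexp_mul_ofReal (z : ℂ) (t : ℝ) :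
    HasDerivAt (fun s : ℝ => Complex.exp (z * s)) (z * Complex.exp (z * t)) t := by
  simpa [mul_comm] using ((hasDerivAt_id (t : ℂ)).const_mul z).cexp.comp_ofReal

theorem hasDerivAt_variationOfConstants [CompleteSpace E] {g : ℝ → E} (hg : Continuous g)
    (y : E) (t : ℝ) :
    HasDerivAt (variationOfConstants z g y) (z • variationOfConstants z g y t - g t) t := by
  have hint : Continuous fun s : ℝ => Complex.exp (-z * s) • g s := by fun_prop
  have hprim : HasDerivAt (fun u => ∫ s in u..0, Complex.exp (-z * s) • g s)
      (-(Complex.exp (-z * t) • g t)) t :=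
    intervalIntegral.integral_hasDerivAt_left (hint.intervalIntegrable _ _)
      (hint.stronglyMeasurableAtFilter _ _) hint.continuousAt
  refine ((hasDerivAt_cexp_mul_ofReal z t).smul (hprim.const_add y)).congr_deriv ?_
  rw [variationOfConstants, smul_neg, smul_smul, ← Complex.exp_add, ← add_mul, add_neg_cancel,
    zero_mul, Complex.exp_zero, one_smul]
  module

theorem eqOn_cexp_smul_of_hasDerivWithinAt {w : ℝ → E} {s : Set ℝ} (hs : Convex ℝ s)
    (h0 : 0 ∈ s) (hw : ∀ t ∈ s, HasDerivWithinAt w (z • w t) s t) :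
    EqOn w (fun t => Complex.exp (z * t) • w 0) s := by
  intro t ht
  have hu : ∀ t ∈ s, HasDerivWithinAt (fun t : ℝ => Complex.exp (-z * t) • w t) 0 s t := by
    intro t ht
    exact ((hasDerivAt_cexp_mul_ofReal (-z) t).hasDerivWithinAt.smul (hw t ht)).congr_deriv
      (by module)
  have hconst := hs.norm_image_sub_le_of_norm_hasDerivWithin_le (C := 0) hu (by simp) h0 ht
  rw [zero_mul, norm_le_zero_iff, sub_eq_zero] at hconst
  simp only [Complex.ofReal_zero, mul_zero, Complex.exp_zero, one_smul] at hconst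
  change w t = Complex.exp (z * t) • w 0
  rw [← hconst, smul_smul, ← Complex.exp_add, ← add_mul, add_neg_cancel, zero_mul,
    Complex.exp_zero, one_smul]

theorem eqOn_variationOfConstants [CompleteSpace E] {f g : ℝ → E} {s : Set ℝ} (hs : Convex ℝ s)
    (h0 : 0 ∈ s) (hg : Continuous g) (hf : ∀ t ∈ s, HasDerivWithinAt f (z • f t - g t) s t) :
    EqOn f (variationOfConstants z g (f 0)) s := by
  intro t ht
  have hdiff := eqOn_cexp_smul_of_hasDerivWithinAt (w := f - variationOfConstants z g (f 0)) hs h0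
    (fun t ht => ((hf t ht).sub
      (hasDerivAt_variationOfConstants hg (f 0) t).hasDerivWithinAt).congr_deriv (by
        simp only [Pi.sub_apply, smul_sub]
        abel)) ht
  simpa [sub_eq_zero] using hdiff

@[fun_prop]
theorem Continuous.variationOfConstants {P : Type*} [TopologicalSpace P] {g : P → ℝ → E}
    (hg : Continuous ↿g) {y : P → E} (hy : Continuous y) {t : P → ℝ} (ht : Continuous t) :
    Continuous fun p => variationOfConstants z (g p) (y p) (t p) := by
  simp only [_root_.variationOfConstants, intervalIntegral.integral_symm (0 : ℝ)]
  fun_prop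

end VariationOfConstants

section DelayResolvent

variable {Y : Type*} [NormedAddCommGroup Y] [NormedSpace ℂ Y] {h : ℝ}

noncomputable def expTensorLinearMap (h : ℝ) (z : ℂ) : Y →ₗ[ℂ] C(Icc (-h) (0 : ℝ), Y) where
  toFun := expTensor h z
  map_add' y₁ y₂ := by ext; simp [expTensor, smul_add]
  map_smul' c y := by
    ext
    exact smul_comm _ c y

variable (hh : -h ≤ 0) (z : ℂ)

/-- The solution of `z φ - φ' = ψ` on `[-h, 0]` with `φ 0 = y`. -/
noncomputable def resolventSolution (ψ : C(Icc (-h) (0 : ℝ), Y)) (y : Y) :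
    C(Icc (-h) (0 : ℝ), Y) :=
  ⟨fun θ => variationOfConstants z (IccExtend hh ψ) y θ, by fun_prop⟩

@[simp]
theorem resolventSolution_apply (ψ : C(Icc (-h) (0 : ℝ), Y)) (y : Y) (θ : Icc (-h) (0 : ℝ)) :
    resolventSolution hh z ψ y θ = variationOfConstants z (IccExtend hh ψ) y θ :=
  rfl

theorem resolventSolution_apply_zero (ψ : C(Icc (-h) (0 : ℝ), Y)) (y : Y) :
    resolventSolution hh z ψ y ⟨0, right_mem_Icc.2 hh⟩ = y :=
  variationOfConstants_zero _ _

theorem resolventSolution_eq_expTensor_add (ψ : C(Icc (-h) (0 : ℝ), Y)) (y : Y) :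
    resolventSolution hh z ψ y = expTensor h z y + resolventSolution hh z ψ 0 := by
  ext θ
  change variationOfConstants z _ y θ = Complex.exp (z * θ) • y + variationOfConstants z _ 0 θ
  simp only [variationOfConstants, zero_add, smul_add]

@[fun_prop]
theorem Continuous.resolventSolution {P : Type*} [TopologicalSpace P]
    {ψ : P → C(Icc (-h) (0 : ℝ), Y)} (hψ : Continuous ψ) {y : P → Y} (hy : Continuous y) :
    Continuous fun p => _root_.resolventSolution hh z (ψ p) (y p) :=
  ContinuousMap.continuous_of_continuous_uncurry _ (by
    simp only [_root_.resolventSolution, ContinuousMap.coe_mk]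
    fun_prop)

theorem hasDerivWithinAt_iff_eq_resolventSolution [CompleteSpace Y]
    {φ ψ : C(Icc (-h) (0 : ℝ), Y)} :
    (∀ t : Icc (-h) (0 : ℝ),
        HasDerivWithinAt (IccExtend hh φ) (z • φ t - ψ t) (Icc (-h) 0) t) ↔
      φ = resolventSolution hh z ψ (φ ⟨0, right_mem_Icc.2 hh⟩) := by
  have hψ : Continuous (IccExtend hh ψ) := by fun_prop
  constructor
  · intro hφ
    have hode := eqOn_variationOfConstants (f := IccExtend hh φ) (z := z) (convex_Icc _ _)
      (right_mem_Icc.2 hh) hψ fun t ht => by simpa [IccExtend_of_mem _ _ ht] using hφ ⟨t, ht⟩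
    ext t
    simpa using hode t.2
  · intro hφ t
    have heq : EqOn (IccExtend hh φ)
        (variationOfConstants z (IccExtend hh ψ) (φ ⟨0, right_mem_Icc.2 hh⟩)) (Icc (-h) 0) :=
      fun s hs => by
        rw [IccExtend_of_mem _ _ hs, hφ]
        simp
    refine ((hasDerivAt_variationOfConstants hψ _ t).hasDerivWithinAt.congr heq
      (heq t.2)).congr_deriv ?_
    rw [← heq t.2, IccExtend_val, IccExtend_val]

theorem exists_resolvent_solution_iff [CompleteSpace Y] (L : C(Icc (-h) (0 : ℝ), Y) →L[ℂ] Y)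
    (α : ℂ) (ψ : C(Icc (-h) (0 : ℝ), Y)) :
    (∃ φ φ' : C(Icc (-h) (0 : ℝ), Y),
        (∀ t : Icc (-h) (0 : ℝ), HasDerivWithinAt (IccExtend hh φ) (φ' t) (Icc (-h) 0) t) ∧
        φ' ⟨0, right_mem_Icc.2 hh⟩ = (-α) • φ ⟨0, right_mem_Icc.2 hh⟩ + L φ ∧
        ψ = z • φ - φ') ↔
      ∃ y : Y, (z + α) • y - L (expTensor h z y) =
        ψ ⟨0, right_mem_Icc.2 hh⟩ + L (resolventSolution hh z ψ 0) := by
  constructor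
  · rintro ⟨φ, φ', hφ', hbc, rfl⟩
    have hsol := (hasDerivWithinAt_iff_eq_resolventSolution hh z (φ := φ) (ψ := z • φ - φ')).1
      fun t => by simpa using hφ' t
    have hLφ : L φ = L (expTensor h z (φ ⟨0, right_mem_Icc.2 hh⟩))
        + L (resolventSolution hh z (z • φ - φ') 0) := by
      conv_lhs => rw [hsol, resolventSolution_eq_expTensor_add, map_add]
    refine ⟨φ ⟨0, right_mem_Icc.2 hh⟩, ?_⟩
    simp only [ContinuousMap.sub_apply, ContinuousMap.smul_apply]
    linear_combination (norm := module) hbc + hLφ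
  · rintro ⟨y, hy⟩
    refine ⟨resolventSolution hh z ψ y, z • resolventSolution hh z ψ y - ψ, ?_, ?_, by abel⟩
    · exact (hasDerivWithinAt_iff_eq_resolventSolution hh z).2 (by simp)
    · have hL : L (resolventSolution hh z ψ y) =
          L (expTensor h z y) + L (resolventSolution hh z ψ 0) := by
        rw [resolventSolution_eq_expTensor_add, map_add]
      simp only [ContinuousMap.sub_apply, ContinuousMap.smul_apply, resolventSolution_apply_zero]
      linear_combination (norm := module) hy - hL

end DelayResolvent

/-- Let `z ∈ ℂ`, `z ≠ −α`, and suppose the operator `L_z y := L(θ ↦ e^{zθ}y)`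
is compact on `Y`. Then the range of `z − A` is closed in `X = C([−h,0],Y)`, i.e. the set
`{ z·φ − φ′ : φ ∈ C¹([−h,0],Y), φ′(0) = −α·φ(0) + Lφ }` is closed. -/
theorem stmt5 {Y : Type*} [NormedAddCommGroup Y] [NormedSpace ℂ Y] [CompleteSpace Y]
    {h : ℝ} (hh : 0 < h)
    (L : C(Set.Icc (-h) (0 : ℝ), Y) →L[ℂ] Y) (α : ℂ) (z : ℂ) (hz : z ≠ -α)
    (hcompact : IsCompactOperator fun y : Y => L (expTensor h z y)) :
    IsClosed {ψ : C(Set.Icc (-h) (0 : ℝ), Y) |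
      ∃ φ φ' : C(Set.Icc (-h) (0 : ℝ), Y),
        (∀ t : Set.Icc (-h) (0 : ℝ),
          HasDerivWithinAt (fun s : ℝ => φ (Set.projIcc (-h) 0 (by linarith) s))
            (φ' t) (Set.Icc (-h) 0) (t : ℝ)) ∧
        φ' ⟨0, by constructor <;> linarith⟩ =
          (-α) • φ ⟨0, by constructor <;> linarith⟩ + L φ ∧
        ψ = z • φ - φ'} := by
  have hh' : -h ≤ 0 := by linarith
  have hμ : z + α ≠ 0 := fun h0 => hz (eq_neg_of_add_eq_zero_left h0)
  let Lz : Y →L[ℂ] Y :=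
    .mkOfIsCompactOperator (f := (L : _ →ₗ[ℂ] Y) ∘ₗ expTensorLinearMap h z) hcompact
  have hclosed : IsClosed (range (Lz - (z + α) • 1 : Y →L[ℂ] Y)) :=
    IsCompactOperator.isClosed_range_sub_smul_one (T := Lz) hcompact hμ
  have hpre := hclosed.preimage
    (f := fun ψ => -(ψ ⟨0, right_mem_Icc.2 hh'⟩ + L (resolventSolution hh' z ψ 0))) (by fun_prop)
  convert hpre using 1
  ext ψ
  refine (exists_resolvent_solution_iff hh' z L α ψ).trans (exists_congr fun y => ?_)
  change _ ↔ L (expTensor h z y) - (z + α) • y = _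
  constructor <;> intro hy <;> linear_combination (norm := module) -hy
end

section
/- Let λ ∈ ℂ and let q : [−1,1] → ℂ be twice continuously differentiable. Define F(x) := (λ+α)e^{λτ₀} q(x) − Σ_{i=1}^N c_i (K_i q)(x), where (K_i q)(x) := ∫_{−1}^{1} e^{−k_i(λ)|x−r|} q(r) dr (so that F = e^{λτ₀}·Δ(λ)q). Then F is twice continuously differentiable on [−1,1] and F″(x) = (λ+α)e^{λτ₀} q″(x) + 2(Σ_{i=1}^N c_i k_i(λ)) q(x) − Σ_{i=1}^N c_i k_i(λ)² (K_i q)(x) for all x ∈ [−1,1]. -/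
/-!
On `[-1, 1]` the kernel splits at `r = x`: with `q` extended continuously to `ℝ`,
`K_k q (x) = L(x) + R(x)` where `L(x) = ∫_{-1}^x e^{-k(x-r)} q(r) dr` and
`R(x) = ∫_x^1 e^{-k(r-x)} q(r) dr`. By the fundamental theorem of calculus
`L' = -k L + q` and `R' = k R - q`, so `(K_k q)' = k (R - L)` and
`(K_k q)'' = k² (L + R) - 2 k q = k² K_k q - 2 k q`; summing over the `N` kernels gives `F''`.
-/

open Set

/-- The integral operator `(K_i q)(x) = ∫_{−1}^{1} e^{−k_i|x−r|} q(r) dr` with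
`k_i = λ + μ_i`. -/
noncomputable def Kop (k : ℂ) (q : ℝ → ℂ) (x : ℝ) : ℂ :=
  ∫ r in (-1 : ℝ)..1, Complex.exp (-k * ((|x - r| : ℝ) : ℂ)) * q r

/-- `F = e^{λτ₀}·Δ(λ)q`, i.e. `F(x) = (λ+α)e^{λτ₀} q(x) − Σᵢ cᵢ (K_i q)(x)`. -/
noncomputable def Fop {N : ℕ} (c μ : Fin N → ℂ) (τ0 : ℝ) (α lam : ℂ)
    (q : ℝ → ℂ) (x : ℝ) : ℂ :=
  (lam + α) * Complex.exp (lam * (τ0 : ℂ)) * q x - ∑ i, c i * Kop (lam + μ i) q x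

lemma ContinuousOn.exists_continuous_eqOn_Icc {α β : Type*} [LinearOrder α]
    [TopologicalSpace α] [OrderTopology α] [TopologicalSpace β] {a b : α} (hab : a ≤ b)
    {f : α → β} (hf : ContinuousOn f (Icc a b)) :
    ∃ g : α → β, Continuous g ∧ EqOn f g (Icc a b) :=
  ⟨fun x => f (projIcc a b hab x),
    hf.comp_continuous (continuous_subtype_val.comp continuous_projIcc)
      fun x => (projIcc a b hab x).2,
    fun x hx => by simp only [projIcc_of_mem hab hx]⟩

noncomputable def leftPart (k : ℂ) (Q : ℝ → ℂ) (x : ℝ) : ℂ :=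
  Complex.exp (-k * x) * ∫ r in (-1 : ℝ)..x, Complex.exp (k * r) * Q r

noncomputable def rightPart (k : ℂ) (Q : ℝ → ℂ) (x : ℝ) : ℂ :=
  Complex.exp (k * x) * ∫ r in x..(1 : ℝ), Complex.exp (-k * r) * Q r

section Parts

variable (k : ℂ) {Q : ℝ → ℂ}

lemma hasDerivAt_cexp_mul_ofReal_s8 (x : ℝ) :
    HasDerivAt (fun y : ℝ => Complex.exp (k * y)) (k * Complex.exp (k * x)) x := by
  simpa [mul_comm] using ((hasDerivAt_id x).ofReal_comp.const_mul k).cexp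

lemma hasDerivAt_leftPart (hQ : Continuous Q) (x : ℝ) :
    HasDerivAt (leftPart k Q) (-k * leftPart k Q x + Q x) x := by
  have hc : Continuous fun r : ℝ => Complex.exp (k * r) * Q r := by fun_prop
  have hint := intervalIntegral.integral_hasDerivAt_right (hc.intervalIntegrable (-1) x)
    hc.stronglyMeasurable.stronglyMeasurableAtFilter hc.continuousAt
  refine ((hasDerivAt_cexp_mul_ofReal_s8 (-k) x).mul hint).congr_deriv ?_
  rw [leftPart, ← mul_assoc (Complex.exp (-k * x)), ← Complex.exp_add]
  simp only [neg_mul, neg_add_cancel, Complex.exp_zero, one_mul]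
  ring

lemma hasDerivAt_rightPart (hQ : Continuous Q) (x : ℝ) :
    HasDerivAt (rightPart k Q) (k * rightPart k Q x - Q x) x := by
  have hc : Continuous fun r : ℝ => Complex.exp (-k * r) * Q r := by fun_prop
  have hint := intervalIntegral.integral_hasDerivAt_left (hc.intervalIntegrable x 1)
    hc.stronglyMeasurable.stronglyMeasurableAtFilter hc.continuousAt
  refine ((hasDerivAt_cexp_mul_ofReal_s8 k x).mul hint).congr_deriv ?_
  rw [rightPart, mul_neg, ← mul_assoc (Complex.exp (k * x)), ← Complex.exp_add]
  simp only [neg_mul, add_neg_cancel, Complex.exp_zero, one_mul]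
  ring

lemma Kop_eq_leftPart_add_rightPart (hQ : Continuous Q) {x : ℝ} (hx : x ∈ Icc (-1 : ℝ) 1) :
    Kop k Q x = leftPart k Q x + rightPart k Q x := by
  have hcont : Continuous fun r : ℝ => Complex.exp (-k * ((|x - r| : ℝ) : ℂ)) * Q r := by
    fun_prop
  rw [Kop, ← intervalIntegral.integral_add_adjacent_intervals
    (hcont.intervalIntegrable (-1) x) (hcont.intervalIntegrable x 1), leftPart, rightPart,
    ← intervalIntegral.integral_const_mul, ← intervalIntegral.integral_const_mul]
  congr 1 <;> refine intervalIntegral.integral_congr fun r hr => ?_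
  · rw [uIcc_of_le hx.1] at hr
    simp only [abs_of_nonneg (sub_nonneg.2 hr.2), ← mul_assoc, ← Complex.exp_add]
    push_cast
    ring_nf
  · rw [uIcc_of_le hx.2] at hr
    simp only [abs_of_nonpos (sub_nonpos.2 hr.1), ← mul_assoc, ← Complex.exp_add]
    push_cast
    ring_nf

end Parts

lemma Kop_congr {k : ℂ} {q Q : ℝ → ℂ} (h : EqOn q Q (Icc (-1) 1)) (x : ℝ) :
    Kop k q x = Kop k Q x := by
  refine intervalIntegral.integral_congr fun r hr => ?_
  rw [uIcc_of_le (by norm_num)] at hr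
  simp only [h hr]

section Derivatives

variable (k : ℂ) {q Q : ℝ → ℂ} (hQ : Continuous Q) (hqQ : EqOn q Q (Icc (-1) 1))
  {x : ℝ} (hx : x ∈ Icc (-1 : ℝ) 1)
include hQ hqQ hx

lemma hasDerivWithinAt_Kop :
    HasDerivWithinAt (Kop k q) (k * (rightPart k Q x - leftPart k Q x)) (Icc (-1) 1) x := by
  have hK : EqOn (Kop k q) (fun y => leftPart k Q y + rightPart k Q y) (Icc (-1) 1) :=
    fun y hy => (Kop_congr hqQ y).trans (Kop_eq_leftPart_add_rightPart k hQ hy)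
  have hd := ((hasDerivAt_leftPart k hQ x).add (hasDerivAt_rightPart k hQ x)).hasDerivWithinAt
    (s := Icc (-1) 1)
  refine (hd.congr hK (hK hx)).congr_deriv ?_
  ring

lemma hasDerivWithinAt_Kop_deriv :
    HasDerivWithinAt (fun y => k * (rightPart k Q y - leftPart k Q y))
      (k ^ 2 * Kop k q x - 2 * k * q x) (Icc (-1) 1) x := by
  have hd := (((hasDerivAt_rightPart k hQ x).sub (hasDerivAt_leftPart k hQ x)).const_mul k)
  rw [Kop_congr hqQ, Kop_eq_leftPart_add_rightPart k hQ hx, hqQ hx]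
  exact hd.hasDerivWithinAt.congr_deriv (by ring)

end Derivatives

theorem stmt8_general (N : ℕ) (τ0 : ℝ) (α : ℂ)
    (c μ : Fin N → ℂ)
    (lam : ℂ) (q q' q'' : ℝ → ℂ)
    (hq1 : ∀ x ∈ Icc (-1 : ℝ) 1, HasDerivWithinAt q (q' x) (Icc (-1) 1) x)
    (hq2 : ∀ x ∈ Icc (-1 : ℝ) 1, HasDerivWithinAt q' (q'' x) (Icc (-1) 1) x)
    (hq3 : ContinuousOn q'' (Icc (-1) 1)) :
    ∃ F' F'' : ℝ → ℂ,
      (∀ x ∈ Icc (-1 : ℝ) 1,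
        HasDerivWithinAt (Fop c μ τ0 α lam q) (F' x) (Icc (-1) 1) x) ∧
      (∀ x ∈ Icc (-1 : ℝ) 1, HasDerivWithinAt F' (F'' x) (Icc (-1) 1) x) ∧
      ContinuousOn F'' (Icc (-1) 1) ∧
      ∀ x ∈ Icc (-1 : ℝ) 1,
        F'' x = (lam + α) * Complex.exp (lam * (τ0 : ℂ)) * q'' x
          + 2 * (∑ i, c i * (lam + μ i)) * q x
          - ∑ i, c i * (lam + μ i) ^ 2 * Kop (lam + μ i) q x := by
  have hqc : ContinuousOn q (Icc (-1) 1) := fun x hx => (hq1 x hx).continuousWithinAt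
  obtain ⟨Q, hQ, hqQ⟩ := hqc.exists_continuous_eqOn_Icc (by norm_num)
  set E := (lam + α) * Complex.exp (lam * (τ0 : ℂ))
  have hK := fun i x hx => hasDerivWithinAt_Kop (lam + μ i) hQ hqQ (x := x) hx
  have hK' := fun i x hx => hasDerivWithinAt_Kop_deriv (lam + μ i) hQ hqQ (x := x) hx
  refine ⟨fun x => E * q' x - ∑ i, c i *
      ((lam + μ i) * (rightPart (lam + μ i) Q x - leftPart (lam + μ i) Q x)),
    fun x => E * q'' x - ∑ i, c i *
      ((lam + μ i) ^ 2 * Kop (lam + μ i) q x - 2 * (lam + μ i) * q x),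
    fun x hx => ((hq1 x hx).const_mul E).sub
      (HasDerivWithinAt.fun_sum fun i _ => (hK i x hx).const_mul (c i)),
    fun x hx => ((hq2 x hx).const_mul E).sub
      (HasDerivWithinAt.fun_sum fun i _ => (hK' i x hx).const_mul (c i)), ?_, fun x _ => ?_⟩
  · refine (continuousOn_const.mul hq3).sub (continuousOn_finsetSum _ fun i _ => ?_)
    have hKc : ContinuousOn (Kop (lam + μ i) q) (Icc (-1) 1) :=
      fun x hx => (hK i x hx).continuousWithinAt
    fun_prop
  · dsimp only
    rw [Finset.mul_sum, Finset.sum_mul, add_sub_assoc, ← Finset.sum_sub_distrib, sub_eq_add_neg,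
      ← Finset.sum_neg_distrib]
    exact congrArg _ (Finset.sum_congr rfl fun i _ => by ring)

/-- If `q` is twice continuously differentiable on `[−1,1]`, then
`F(x) = (λ+α)e^{λτ₀} q(x) − Σᵢ cᵢ (K_i q)(x)` is twice continuously differentiable and
`F″(x) = (λ+α)e^{λτ₀} q″(x) + 2(Σᵢ cᵢ kᵢ) q(x) − Σᵢ cᵢ kᵢ² (K_i q)(x)` on `[−1,1]`. -/
theorem stmt8 (N : ℕ) (hN : 1 ≤ N) (τ0 : ℝ) (hτ0 : 0 ≤ τ0) (α : ℂ)
    (c μ : Fin N → ℂ) (hc : ∀ i, c i ≠ 0) (hμ : Function.Injective μ)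
    (lam : ℂ) (q q' q'' : ℝ → ℂ)
    (hq1 : ∀ x ∈ Icc (-1 : ℝ) 1, HasDerivWithinAt q (q' x) (Icc (-1) 1) x)
    (hq2 : ∀ x ∈ Icc (-1 : ℝ) 1, HasDerivWithinAt q' (q'' x) (Icc (-1) 1) x)
    (hq3 : ContinuousOn q'' (Icc (-1) 1)) :
    ∃ F' F'' : ℝ → ℂ,
      (∀ x ∈ Icc (-1 : ℝ) 1,
        HasDerivWithinAt (Fop c μ τ0 α lam q) (F' x) (Icc (-1) 1) x) ∧
      (∀ x ∈ Icc (-1 : ℝ) 1, HasDerivWithinAt F' (F'' x) (Icc (-1) 1) x) ∧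
      ContinuousOn F'' (Icc (-1) 1) ∧
      ∀ x ∈ Icc (-1 : ℝ) 1,
        F'' x = (lam + α) * Complex.exp (lam * (τ0 : ℂ)) * q'' x
          + 2 * (∑ i, c i * (lam + μ i)) * q x
          - ∑ i, c i * (lam + μ i) ^ 2 * Kop (lam + μ i) q x :=
  stmt8_general N τ0 α c μ lam q q' q'' hq1 hq2 hq3
end

section
/- Let λ ∈ ℂ with λ ∉ 𝒮 and λ ≠ −α, suppose the polynomial 𝒫(ρ) := (e^{λτ₀}(λ+α)/2) ∏_{j=1}^{N}(ρ² − k_j(λ)²) + Σ_{i=1}^{N} c_i k_i(λ) ∏_{j≠i}(ρ² − k_j(λ)²) has 2N pairwise distinct roots ±ρ₁,…,±ρ_N, and suppose k_j(λ) ≠ ±ρ_i for all i,j ∈ {1,…,N}. Given Γ = (γ₁,…,γ_N,γ_{−1},…,γ_{−N}) ∈ ℂ^{2N}, define q_Γ(x) := Σ_{i=1}^{N} [ γ_i e^{ρ_i x} + γ_{−i} e^{−ρ_i x} ]. Then Δ(λ)q_Γ = 0 on [−1,1] if and only if S(λ)Γ = 0, where S(λ) is the 2N×2N block matrix S(λ)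 = [[S⁻, S⁺],[S⁺, S⁻]] with (S⁻)_{j,i} = e^{ρ_i}/(k_j(λ) − ρ_i) and (S⁺)_{j,i} = e^{−ρ_i}/(k_j(λ) + ρ_i). -/
/-!
Write `kᵢ = λ + μᵢ`. For a root `σ` of `𝒫` with `kᵢ ≠ ±σ`, dividing `𝒫(σ) = 0` by
`∏ⱼ (σ² - kⱼ²)` gives the dispersion relation `λ + α = e^{-λτ₀} Σᵢ 2cᵢkᵢ/(kᵢ² - σ²)`, which
cancels the `e^{σx}` part of `Δ(λ) e^{σ·}` and leaves only boundary terms in `e^{±kᵢx}`. Since `𝒫`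
is even in `σ`, this applies to all `±ρᵢ`, and collecting terms gives
`Δ(λ) q_Γ(x) = e^{-λτ₀} Σᵢ cᵢ e^{-kᵢ} ((S Γ)ᵢ e^{kᵢx} + (S Γ)_{-i} e^{-kᵢx})`.

The `2N` exponents `±kᵢ` are pairwise distinct: `λ ∉ 𝒮` separates the `kᵢ²`, and `kⱼ ≠ 0`
because, as a polynomial in `ρ²` of degree `N`, `𝒫` equals `e^{λτ₀}(λ+α)/2 · ∏ᵢ (ρ² - ρᵢ²)`,
which is nonzero at `ρ² = kⱼ²`, while the defining formula gives `cⱼkⱼ ∏_{l≠j} (kⱼ² - k_l²)` there.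
The exponentials `e^{±kᵢx}` are linearly independent on any interval (their derivatives at a
point form a Vandermonde system), so `Δ(λ) q_Γ = 0` on `[-1,1]` forces `S Γ = 0`.
-/

open Set

/-- The connectivity kernel `J₀(x,r) = Σᵢ cᵢ e^{−μᵢ|x−r|}`. -/
noncomputable def kerJ0 {N : ℕ} (c μ : Fin N → ℂ) (x r : ℝ) : ℂ :=
  ∑ i, c i * Complex.exp (-μ i * ((|x - r| : ℝ) : ℂ))

/-- The operator `Δ(λ)` acting on functions on `[-1,1]`. -/
noncomputable def DeltaOp {N : ℕ} (c μ : Fin N → ℂ) (τ0 : ℝ) (α lam : ℂ)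
    (q : ℝ → ℂ) (x : ℝ) : ℂ :=
  (lam + α) * q x -
    ∫ r in (-1 : ℝ)..1,
      kerJ0 c μ x r * Complex.exp (-lam * (τ0 : ℂ)) *
        Complex.exp (-lam * ((|x - r| : ℝ) : ℂ)) * q r

/-- The exceptional set `𝒮 = { λ : (λ+μᵢ)² = (λ+μⱼ)² for some i ≠ j }`. -/
def badSet {N : ℕ} (μ : Fin N → ℂ) : Set ℂ :=
  {lam : ℂ | ∃ i j : Fin N, i ≠ j ∧ (lam + μ i) ^ 2 = (lam + μ j) ^ 2}

/-- The characteristic polynomial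
`𝒫(ρ) = (e^{λτ₀}(λ+α)/2)·∏ⱼ(ρ²−kⱼ²) + Σᵢ cᵢ kᵢ ∏_{j≠i}(ρ²−kⱼ²)`, `kᵢ = λ+μᵢ`. -/
noncomputable def charP {N : ℕ} (c μ : Fin N → ℂ) (τ0 : ℝ) (α lam ρ : ℂ) : ℂ :=
  Complex.exp (lam * (τ0 : ℂ)) * (lam + α) / 2 * ∏ j, (ρ ^ 2 - (lam + μ j) ^ 2)
    + ∑ i, c i * (lam + μ i) * ∏ j ∈ Finset.univ.erase i, (ρ ^ 2 - (lam + μ j) ^ 2)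

/-- The `2N×2N` block matrix `S(λ) = [[S⁻,S⁺],[S⁺,S⁻]]` with
`(S⁻)_{j,i} = e^{ρᵢ}/(kⱼ−ρᵢ)`, `(S⁺)_{j,i} = e^{−ρᵢ}/(kⱼ+ρᵢ)`. -/
noncomputable def Smat {N : ℕ} (μ : Fin N → ℂ) (lam : ℂ) (ρ : Fin N → ℂ) :
    Matrix (Fin N ⊕ Fin N) (Fin N ⊕ Fin N) ℂ :=
  Matrix.fromBlocks
    (Matrix.of fun j i => Complex.exp (ρ i) / (lam + μ j - ρ i))
    (Matrix.of fun j i => Complex.exp (-ρ i) / (lam + μ j + ρ i))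
    (Matrix.of fun j i => Complex.exp (-ρ i) / (lam + μ j + ρ i))
    (Matrix.of fun j i => Complex.exp (ρ i) / (lam + μ j - ρ i))

/-- The function `q_Γ(x) = Σᵢ (γᵢ e^{ρᵢx} + γ₋ᵢ e^{−ρᵢx})`. -/
noncomputable def qGamma {N : ℕ} (ρ : Fin N → ℂ) (Γ : Fin N ⊕ Fin N → ℂ) (x : ℝ) : ℂ :=
  ∑ i, (Γ (Sum.inl i) * Complex.exp (ρ i * (x : ℂ)) +
    Γ (Sum.inr i) * Complex.exp (-ρ i * (x : ℂ)))

open Filter Topology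

theorem hasDerivAt_cexp_const_mul_ofReal (κ : ℂ) (x : ℝ) :
    HasDerivAt (fun x : ℝ => Complex.exp (κ * x)) (κ * Complex.exp (κ * x)) x := by
  simpa [mul_comm] using (((hasDerivAt_id (x : ℂ)).const_mul κ).cexp).comp_ofReal

theorem iteratedDeriv_sum_mul_cexp {ι : Type*} [Fintype ι] (a κ : ι → ℂ) (m : ℕ) :
    iteratedDeriv m (fun x : ℝ => ∑ i, a i * Complex.exp (κ i * x)) =
      fun x : ℝ => ∑ i, a i * κ i ^ m * Complex.exp (κ i * x) := by
  induction m with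
  | zero => simp
  | succ m ih =>
    funext x
    rw [iteratedDeriv_succ, ih]
    refine (HasDerivAt.fun_sum fun i _ =>
      (hasDerivAt_cexp_const_mul_ofReal (κ i) x).const_mul (a i * κ i ^ m)).deriv.trans ?_
    simp only [pow_succ]
    exact Finset.sum_congr rfl fun i _ => by ring

theorem eq_zero_of_sum_mul_cexp_eventuallyEq_zero {ι : Type*} [Fintype ι] {κ : ι → ℂ}
    (hκ : Function.Injective κ) {a : ι → ℂ} {x₀ : ℝ}
    (h : (fun x : ℝ => ∑ i, a i * Complex.exp (κ i * x)) =ᶠ[𝓝 x₀] 0) : a = 0 := by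
  have hmoments : ∀ m : ℕ, ∑ i, a i * Complex.exp (κ i * x₀) * κ i ^ m = 0 := by
    intro m
    have := h.iteratedDeriv_eq m
    rw [iteratedDeriv_sum_mul_cexp a κ m, Pi.zero_def, iteratedDeriv_const] at this
    simpa [mul_right_comm _ (κ _ ^ m)] using this
  let e := Fintype.equivFin ι
  have hvand : (fun i => a i * Complex.exp (κ i * x₀)) ∘ e.symm = 0 :=
    Matrix.eq_zero_of_forall_pow_sum_mul_pow_eq_zero (hκ.comp e.symm.injective)
      fun m => by simpa [← e.symm.sum_comp] using hmoments m
  funext i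
  simpa [Complex.exp_ne_zero] using congrFun hvand (e i)

theorem integral_cexp_neg_mul_abs_sub_mul_cexp {k σ : ℂ} (hkσ : k + σ ≠ 0) (hkσ' : k - σ ≠ 0)
    {a b x : ℝ} (hx : x ∈ Icc a b) :
    ∫ r in a..b, Complex.exp (-k * ((|x - r| : ℝ) : ℂ)) * Complex.exp (σ * r) =
      2 * k / (k ^ 2 - σ ^ 2) * Complex.exp (σ * x)
        - Complex.exp (σ * a) / (k + σ) * Complex.exp (-k * (x - a))
        - Complex.exp (σ * b) / (k - σ) * Complex.exp (-k * (b - x)) := by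
  have hσk : σ - k ≠ 0 := by rw [← neg_sub]; exact neg_ne_zero.mpr hkσ'
  have hint : ∀ s t : ℝ, IntervalIntegrable
      (fun r : ℝ => Complex.exp (-k * ((|x - r| : ℝ) : ℂ)) * Complex.exp (σ * r))
      MeasureTheory.volume s t :=
    fun s t => by apply Continuous.intervalIntegrable; fun_prop
  have hleft : ∫ r in a..x, Complex.exp (-k * ((|x - r| : ℝ) : ℂ)) * Complex.exp (σ * r) =
      Complex.exp (-k * x) *
        ((Complex.exp ((k + σ) * x) - Complex.exp ((k + σ) * a)) / (k + σ)) := by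
    rw [← integral_exp_mul_complex hkσ, ← intervalIntegral.integral_const_mul]
    refine intervalIntegral.integral_congr fun r hr => ?_
    rw [uIcc_of_le hx.1] at hr
    simp only [abs_of_nonneg (sub_nonneg.mpr hr.2), ← Complex.exp_add]
    push_cast
    ring_nf
  have hright : ∫ r in x..b, Complex.exp (-k * ((|x - r| : ℝ) : ℂ)) * Complex.exp (σ * r) =
      Complex.exp (k * x) *
        ((Complex.exp ((σ - k) * b) - Complex.exp ((σ - k) * x)) / (σ - k)) := by
    rw [← integral_exp_mul_complex hσk, ← intervalIntegral.integral_const_mul]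
    refine intervalIntegral.integral_congr fun r hr => ?_
    rw [uIcc_of_le hx.2] at hr
    simp only [abs_sub_comm x r, abs_of_nonneg (sub_nonneg.mpr hr.1), ← Complex.exp_add]
    push_cast
    ring_nf
  rw [← intervalIntegral.integral_add_adjacent_intervals (hint a x) (hint x b), hleft, hright]
  simp only [add_mul, sub_mul, neg_mul, mul_sub, Complex.exp_add, Complex.exp_sub, Complex.exp_neg]
  rw [show k ^ 2 - σ ^ 2 = (k + σ) * (k - σ) by ring]
  field_simp
  ring

section Nodal

open Finset Polynomial Lagrange

theorem smul_nodal_add_sum_eq_smul_nodal {F ι : Type*} [Field F] [Fintype ι] [DecidableEq ι]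
    (A : F) (K b : ι → F) {R : ι → F} (hR : Function.Injective R)
    (hroot : ∀ i, (A • nodal univ K + ∑ j, b j • nodal (univ.erase j) K).eval (R i) = 0) :
    A • nodal univ K + ∑ j, b j • nodal (univ.erase j) K = A • nodal univ R := by
  have hmonic : (nodal univ K - nodal univ R).degree < #(univ : Finset ι) := by
    simpa [degree_nodal] using degree_sub_lt_left (p := nodal univ K) (q := nodal univ R)
      (by rw [degree_nodal, degree_nodal]) nodal_ne_zero
      (by rw [nodal_monic.leadingCoeff, nodal_monic.leadingCoeff])
  have hsum : (∑ j, b j • nodal (univ.erase j) K).degree < #(univ : Finset ι) := by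
    refine (degree_sum_le _ _).trans_lt <| (Finset.sup_lt_iff (WithBot.bot_lt_coe _)).mpr
      fun j _ => (degree_smul_le _ _).trans_lt ?_
    rw [degree_nodal]
    exact_mod_cast card_erase_lt_of_mem (mem_univ j)
  refine eq_of_degree_sub_lt_of_eval_index_eq (s := univ) hR.injOn ?_ fun i _ => ?_
  · rw [add_sub_right_comm, ← smul_sub]
    exact (degree_add_le _ _).trans_lt (max_lt ((degree_smul_le _ _).trans_lt hmonic) hsum)
  · rw [hroot i, eval_smul, eval_nodal_at_node (mem_univ i), smul_zero]

theorem ne_zero_of_eval_smul_nodal_add_sum_eq_zero {F ι : Type*} [Field F] [Fintype ι]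
    [DecidableEq ι] {A : F} (hA : A ≠ 0) {K b R : ι → F} (hR : Function.Injective R)
    (hKR : ∀ i j, K j ≠ R i)
    (hroot : ∀ i, (A • nodal univ K + ∑ j, b j • nodal (univ.erase j) K).eval (R i) = 0)
    (j : ι) : b j ≠ 0 := by
  intro hb
  have hK := congrArg (eval (K j)) (smul_nodal_add_sum_eq_smul_nodal A K b hR hroot)
  have hlhs : ∑ l, b l • (nodal (univ.erase l) K).eval (K j) = 0 := by
    refine Finset.sum_eq_zero fun l _ => ?_
    rcases eq_or_ne l j with rfl | hlj
    · rw [hb, zero_smul]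
    · rw [eval_nodal_at_node (mem_erase.mpr ⟨hlj.symm, mem_univ j⟩), smul_zero]
  simp only [eval_add, eval_smul, eval_finsetSum, eval_nodal_at_node (mem_univ j), smul_zero,
    zero_add, hlhs] at hK
  exact smul_ne_zero hA (eval_nodal_not_at_node fun i _ => hKR i j) hK.symm

end Nodal

section DeltaOp

variable {N : ℕ} (c μ : Fin N → ℂ) (τ0 : ℝ) (α lam : ℂ)

theorem continuous_kerJ0 (x : ℝ) : Continuous (kerJ0 c μ x) := by
  unfold kerJ0; fun_prop

theorem DeltaOp_sum_mul {ι : Type*} [Fintype ι] (a : ι → ℂ) {q : ι → ℝ → ℂ}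
    (hq : ∀ i, Continuous (q i)) (x : ℝ) :
    DeltaOp c μ τ0 α lam (fun y => ∑ i, a i * q i y) x =
      ∑ i, a i * DeltaOp c μ τ0 α lam (q i) x := by
  have hK := continuous_kerJ0 c μ x
  simp only [DeltaOp, Finset.mul_sum]
  rw [intervalIntegral.integral_finsetSum fun i _ => by
    apply Continuous.intervalIntegrable; have := hq i; fun_prop, ← Finset.sum_sub_distrib]
  refine Finset.sum_congr rfl fun i _ => ?_
  rw [mul_sub, ← intervalIntegral.integral_const_mul]
  congr 1
  · ring
  · congr 1; funext r; ring

theorem add_eq_cexp_mul_sum_of_charP_eq_zero {σ : ℂ} (hσ : charP c μ τ0 α lam σ = 0)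
    (hkσ : ∀ i, (lam + μ i) ^ 2 ≠ σ ^ 2) :
    lam + α = Complex.exp (-lam * τ0) *
      ∑ i, 2 * c i * (lam + μ i) / ((lam + μ i) ^ 2 - σ ^ 2) := by
  have hsub : ∀ i, (lam + μ i) ^ 2 - σ ^ 2 ≠ 0 := fun i => sub_ne_zero.mpr (hkσ i)
  have hprod : ∏ j, (σ ^ 2 - (lam + μ j) ^ 2) ≠ 0 :=
    Finset.prod_ne_zero_iff.mpr fun j _ => sub_ne_zero.mpr (hkσ j).symm
  have hfactor : charP c μ τ0 α lam σ = (∏ j, (σ ^ 2 - (lam + μ j) ^ 2)) *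
      (Complex.exp (lam * τ0) * (lam + α) / 2 -
        ∑ i, c i * (lam + μ i) / ((lam + μ i) ^ 2 - σ ^ 2)) := by
    rw [charP, mul_sub, Finset.mul_sum, sub_eq_add_neg, ← Finset.sum_neg_distrib]
    congr 1
    · ring
    refine Finset.sum_congr rfl fun i _ => ?_
    rw [← Finset.mul_prod_erase _ _ (Finset.mem_univ i)]
    field_simp [hsub i]
    ring
  rw [hfactor, mul_eq_zero, or_iff_right hprod, sub_eq_zero] at hσ
  have htwice : ∑ i, 2 * c i * (lam + μ i) / ((lam + μ i) ^ 2 - σ ^ 2) =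
      2 * ∑ i, c i * (lam + μ i) / ((lam + μ i) ^ 2 - σ ^ 2) := by
    rw [Finset.mul_sum]; congr! 1; ring
  rw [htwice, ← hσ, neg_mul, Complex.exp_neg]
  field_simp

theorem DeltaOp_cexp_of_charP_eq_zero {σ : ℂ} (hσ : charP c μ τ0 α lam σ = 0)
    (hkσ : ∀ i, lam + μ i ≠ σ ∧ lam + μ i ≠ -σ) {x : ℝ} (hx : x ∈ Icc (-1 : ℝ) 1) :
    DeltaOp c μ τ0 α lam (fun y => Complex.exp (σ * y)) x =
      Complex.exp (-lam * τ0) * ∑ i, c i * Complex.exp (-(lam + μ i)) *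
        (Complex.exp σ / (lam + μ i - σ) * Complex.exp ((lam + μ i) * x) +
          Complex.exp (-σ) / (lam + μ i + σ) * Complex.exp (-(lam + μ i) * x)) := by
  have hplus : ∀ i, lam + μ i + σ ≠ 0 := fun i h => (hkσ i).2 (eq_neg_of_add_eq_zero_left h)
  have hminus : ∀ i, lam + μ i - σ ≠ 0 := fun i => sub_ne_zero.mpr (hkσ i).1
  have hsq : ∀ i, (lam + μ i) ^ 2 ≠ σ ^ 2 := fun i h => by
    rcases sq_eq_sq_iff_eq_or_eq_neg.mp h with h | h
    exacts [(hkσ i).1 h, (hkσ i).2 h]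
  have hintegrand : (fun r : ℝ => kerJ0 c μ x r * Complex.exp (-lam * τ0) *
      Complex.exp (-lam * ((|x - r| : ℝ) : ℂ)) * Complex.exp (σ * r)) = fun r : ℝ =>
      Complex.exp (-lam * τ0) * ∑ i, c i *
        (Complex.exp (-(lam + μ i) * ((|x - r| : ℝ) : ℂ)) * Complex.exp (σ * r)) := by
    funext r
    simp only [kerJ0, Finset.sum_mul, Finset.mul_sum]
    refine Finset.sum_congr rfl fun i _ => ?_
    rw [neg_add, add_mul, Complex.exp_add]
    ring
  rw [DeltaOp, hintegrand, intervalIntegral.integral_const_mul,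
    intervalIntegral.integral_finsetSum fun i _ => by
      apply Continuous.intervalIntegrable; fun_prop,
    add_eq_cexp_mul_sum_of_charP_eq_zero c μ τ0 α lam hσ hsq, mul_assoc, ← mul_sub,
    Finset.sum_mul, ← Finset.sum_sub_distrib]
  congr 1
  refine Finset.sum_congr rfl fun i _ => ?_
  rw [intervalIntegral.integral_const_mul,
    integral_cexp_neg_mul_abs_sub_mul_cexp (hplus i) (hminus i) hx]
  set k := lam + μ i
  have hleft :
      Complex.exp (-k * (x - ((-1 : ℝ) : ℂ))) = Complex.exp (-k) * Complex.exp (-k * x) := by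
    rw [← Complex.exp_add]; push_cast; ring_nf
  have hright :
      Complex.exp (-k * (((1 : ℝ) : ℂ) - x)) = Complex.exp (-k) * Complex.exp (k * x) := by
    rw [← Complex.exp_add]; push_cast; ring_nf
  rw [hleft, hright]
  push_cast
  simp only [mul_neg_one, mul_one]
  ring

theorem charP_neg (ρ : ℂ) : charP c μ τ0 α lam (-ρ) = charP c μ τ0 α lam ρ := by
  simp [charP]

end DeltaOp

theorem qGamma_eq_sum {N : ℕ} (ρ : Fin N → ℂ) (Γ : Fin N ⊕ Fin N → ℂ) (x : ℝ) :
    qGamma ρ Γ x = ∑ s, Γ s * Complex.exp (Sum.elim ρ (-ρ) s * x) := by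
  simp [qGamma, Fintype.sum_sum_type, Finset.sum_add_distrib]

section Smat

variable {N : ℕ} (μ : Fin N → ℂ) (lam : ℂ) (ρ : Fin N → ℂ)

theorem Smat_inl_apply (j : Fin N) (s : Fin N ⊕ Fin N) :
    Smat μ lam ρ (Sum.inl j) s =
      Complex.exp (Sum.elim ρ (-ρ) s) / (lam + μ j - Sum.elim ρ (-ρ) s) := by
  cases s <;> simp [Smat]

theorem Smat_inr_apply (j : Fin N) (s : Fin N ⊕ Fin N) :
    Smat μ lam ρ (Sum.inr j) s =
      Complex.exp (-Sum.elim ρ (-ρ) s) / (lam + μ j + Sum.elim ρ (-ρ) s) := by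
  cases s <;> simp [Smat, ← sub_eq_add_neg]

end Smat

theorem DeltaOp_qGamma {N : ℕ} (c μ : Fin N → ℂ) (τ0 : ℝ) (α lam : ℂ) {ρ : Fin N → ℂ}
    (hroot : ∀ i, charP c μ τ0 α lam (ρ i) = 0)
    (hkρ : ∀ i j, lam + μ j ≠ ρ i ∧ lam + μ j ≠ -ρ i)
    (Γ : Fin N ⊕ Fin N → ℂ) {x : ℝ} (hx : x ∈ Icc (-1 : ℝ) 1) :
    DeltaOp c μ τ0 α lam (qGamma ρ Γ) x =
      Complex.exp (-lam * τ0) * ∑ i, c i * Complex.exp (-(lam + μ i)) *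
        ((Smat μ lam ρ).mulVec Γ (Sum.inl i) * Complex.exp ((lam + μ i) * x) +
          (Smat μ lam ρ).mulVec Γ (Sum.inr i) * Complex.exp (-(lam + μ i) * x)) := by
  have hσroot : ∀ s, charP c μ τ0 α lam (Sum.elim ρ (-ρ) s) = 0 := by
    rintro (i | i)
    exacts [hroot i, (charP_neg c μ τ0 α lam (ρ i)).trans (hroot i)]
  have hσk : ∀ s j, lam + μ j ≠ Sum.elim ρ (-ρ) s ∧ lam + μ j ≠ -Sum.elim ρ (-ρ) s := by
    rintro (i | i) j
    exacts [hkρ i j, by simpa [and_comm] using hkρ i j]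
  rw [funext (qGamma_eq_sum ρ Γ), DeltaOp_sum_mul c μ τ0 α lam Γ fun s => by fun_prop]
  simp only [DeltaOp_cexp_of_charP_eq_zero c μ τ0 α lam (hσroot _) (hσk _) hx, Matrix.mulVec,
    dotProduct, Smat_inl_apply, Smat_inr_apply, Finset.mul_sum, Finset.sum_mul, mul_add,
    Finset.sum_add_distrib]
  congr 1 <;> rw [Finset.sum_comm] <;>
    exact Finset.sum_congr rfl fun _ _ => Finset.sum_congr rfl fun _ _ => by ring

theorem Function.Injective.sum_elim_neg {R ι : Type*} [Ring R] [IsAddTorsionFree R] {k : ι → R}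
    (hsq : Function.Injective fun i => k i ^ 2) (hk : ∀ i, k i ≠ 0) :
    Function.Injective (Sum.elim k (-k)) := by
  have heq_of_eq_neg : ∀ {i j}, k i = -k j → i = j := fun h => hsq (by simp only [h, neg_sq])
  have hneg : ∀ {i j}, k i = -k j → False :=
    fun h => hk _ (self_eq_neg.mp (heq_of_eq_neg h ▸ h))
  rintro (i | i) (j | j) h <;> simp only [Sum.elim_inl, Sum.elim_inr, Pi.neg_apply, neg_inj] at h
  · rw [hsq (congrArg (· ^ 2) h)]
  · exact (hneg h).elim
  · exact (hneg h.symm).elim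
  · rw [hsq (congrArg (· ^ 2) h)]

theorem add_ne_zero_of_charP_roots {N : ℕ} {c μ : Fin N → ℂ} {τ0 : ℝ} {α lam : ℂ}
    (hlamα : lam ≠ -α) {ρ : Fin N → ℂ} (hρd : ∀ i j, i ≠ j → ρ i ≠ ρ j ∧ ρ i ≠ -ρ j)
    (hroot : ∀ i, charP c μ τ0 α lam (ρ i) = 0)
    (hkρ : ∀ i j, lam + μ j ≠ ρ i ∧ lam + μ j ≠ -ρ i) (j : Fin N) : lam + μ j ≠ 0 := by
  classical
  have hA : Complex.exp (lam * τ0) * (lam + α) / 2 ≠ 0 := by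
    have : lam + α ≠ 0 := fun h => hlamα (eq_neg_of_add_eq_zero_left h)
    exact div_ne_zero (mul_ne_zero (Complex.exp_ne_zero _) this) two_ne_zero
  have hR : Function.Injective fun i => ρ i ^ 2 := fun i i' h => by
    by_contra hne
    exact (sq_eq_sq_iff_eq_or_eq_neg.mp h).elim (hρd i i' hne).1 (hρd i i' hne).2
  have hKR : ∀ i j, (lam + μ j) ^ 2 ≠ ρ i ^ 2 := fun i j h =>
    (sq_eq_sq_iff_eq_or_eq_neg.mp h).elim (hkρ i j).1 (hkρ i j).2
  refine right_ne_zero_of_mul <| ne_zero_of_eval_smul_nodal_add_sum_eq_zero hA hR hKR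
    (b := fun i => c i * (lam + μ i)) (fun i => ?_) j
  simpa [Lagrange.eval_nodal, Polynomial.eval_finsetSum, charP] using hroot i

theorem stmt13_general (N : ℕ) (τ0 : ℝ) (α : ℂ)
    (c μ : Fin N → ℂ) (hc : ∀ i, c i ≠ 0)
    (lam : ℂ) (hlam : lam ∉ badSet μ) (hlamα : lam ≠ -α)
    (ρ : Fin N → ℂ)
    (hρd : ∀ i j, i ≠ j → ρ i ≠ ρ j ∧ ρ i ≠ -ρ j)
    (hroot : ∀ i, charP c μ τ0 α lam (ρ i) = 0)
    (hkρ : ∀ i j, lam + μ j ≠ ρ i ∧ lam + μ j ≠ -ρ i)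
    (Γ : Fin N ⊕ Fin N → ℂ) :
    (∀ x ∈ Icc (-1 : ℝ) 1, DeltaOp c μ τ0 α lam (qGamma ρ Γ) x = 0) ↔
      (Smat μ lam ρ).mulVec Γ = 0 := by
  constructor
  · intro hΔ
    have hκ : Function.Injective (Sum.elim (fun j => lam + μ j) (-fun j => lam + μ j)) :=
      Function.Injective.sum_elim_neg (fun i j h => by_contra fun hne => hlam ⟨i, j, hne, h⟩)
        (add_ne_zero_of_charP_roots hlamα hρd hroot hkρ)
    set w : Fin N → ℂ := fun i => Complex.exp (-lam * τ0) * c i * Complex.exp (-(lam + μ i))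
    have hw : ∀ i, w i ≠ 0 := fun i => by simp [w, hc i, Complex.exp_ne_zero]
    have hcoeff := eq_zero_of_sum_mul_cexp_eventuallyEq_zero hκ (x₀ := 0)
      (a := Sum.elim (fun i => w i * (Smat μ lam ρ).mulVec Γ (Sum.inl i))
        (fun i => w i * (Smat μ lam ρ).mulVec Γ (Sum.inr i))) <| by
      filter_upwards [Icc_mem_nhds (by norm_num : (-1 : ℝ) < 0) (by norm_num : (0 : ℝ) < 1)]
        with x hx
      rw [Pi.zero_apply, ← hΔ x hx, DeltaOp_qGamma c μ τ0 α lam hroot hkρ Γ hx,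
        Fintype.sum_sum_type, ← Finset.sum_add_distrib, Finset.mul_sum]
      refine Finset.sum_congr rfl fun i _ => ?_
      simp only [Sum.elim_inl, Sum.elim_inr, Pi.neg_apply, w]
      ring
    funext s
    rcases s with i | i
    · exact (mul_eq_zero.mp (congrFun hcoeff (Sum.inl i))).resolve_left (hw i)
    · exact (mul_eq_zero.mp (congrFun hcoeff (Sum.inr i))).resolve_left (hw i)
  · intro hS x hx
    simp [DeltaOp_qGamma c μ τ0 α lam hroot hkρ Γ hx, hS]

/-- Let `λ ∉ 𝒮`, `λ ≠ −α`, suppose `𝒫` has `2N` pairwise distinct roots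
`±ρ₁,…,±ρ_N` with `kⱼ ≠ ±ρᵢ` for all `i,j`. Then for `Γ ∈ ℂ^{2N}`,
`Δ(λ)q_Γ = 0` on `[−1,1]` if and only if `S(λ)Γ = 0`. -/
theorem stmt13 (N : ℕ) (hN : 1 ≤ N) (τ0 : ℝ) (hτ0 : 0 ≤ τ0) (α : ℂ)
    (c μ : Fin N → ℂ) (hc : ∀ i, c i ≠ 0) (hμ : Function.Injective μ)
    (lam : ℂ) (hlam : lam ∉ badSet μ) (hlamα : lam ≠ -α)
    (ρ : Fin N → ℂ)
    (hρ0 : ∀ i, ρ i ≠ 0)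
    (hρd : ∀ i j, i ≠ j → ρ i ≠ ρ j ∧ ρ i ≠ -ρ j)
    (hroot : ∀ i, charP c μ τ0 α lam (ρ i) = 0)
    (hkρ : ∀ i j, lam + μ j ≠ ρ i ∧ lam + μ j ≠ -ρ i)
    (Γ : Fin N ⊕ Fin N → ℂ) :
    (∀ x ∈ Icc (-1 : ℝ) 1, DeltaOp c μ τ0 α lam (qGamma ρ Γ) x = 0) ↔
      (Smat μ lam ρ).mulVec Γ = 0 :=
  stmt13_general N τ0 α c μ hc lam hlam hlamα ρ hρd hroot hkρ Γ
end

section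
/- There exist functions ψ, ψ̄ : ℝ → ℝ that agree Lebesgue-almost everywhere with the following property. Set φ(t,r) := ψ(r+t) and φ̄(t,r) := ψ̄(r+t) for t ∈ [−1,0] and r ∈ (0,1), and let τ(x,r) := r. Then for every t ∈ [−1,0] one has φ(t,r) = φ̄(t,r) for Lebesgue-almost every r ∈ (0,1), but for every x ∈ (0,1) one has φ(−τ(x,r),r) ≠ φ̄(−τ(x,r),r) for every r ∈ (0,1); in particular, for no x ∈ (0,1) does φ(−τ(x,·),·) = φ̄(−τ(x,·),·) hold almost everywhere. (This shows that on the state space L²(0,1) the delayed substitution operator entering the neural field equation is not well defined for arbitrary continuous bounded delay functions τ.) -/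
/-! Take ψ = 0 and ψ̄ the indicator of {0}. For fixed t the set of r with r + t = 0 is a single
point, hence null, but along the delayed diagonal t = -r the argument r + t is always 0, so
the evaluation lands in the null set for every r. -/

open MeasureTheory Set Filter

theorem indicator_singleton_ae_eq_zero {α β : Type*} [MeasurableSpace α] [Zero β]
    (μ : Measure α) [NullSingletonClass μ] (a : α) (f : α → β) :
    ({a} : Set α).indicator f =ᵐ[μ] 0 :=
  (μ.ae_ne a).mono fun _ hx => indicator_of_notMem (notMem_singleton_iff.2 hx) f

theorem ae_eq_comp_add_right {G β : Type*} [MeasurableSpace G] [Add G] [MeasurableAdd G]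
    {μ : Measure G} [μ.IsAddRightInvariant] {f g : G → β} (h : f =ᵐ[μ] g) (t : G) :
    (fun r => f (r + t)) =ᵐ[μ] fun r => g (r + t) :=
  (measurePreserving_add_right μ t).quasiMeasurePreserving.ae_eq_comp h

theorem not_ae_restrict_of_forall_not {α : Type*} [MeasurableSpace α] {μ : Measure α}
    {s : Set α} {p : α → Prop} (hs : MeasurableSet s) (hμs : μ s ≠ 0)
    (hp : ∀ x ∈ s, ¬ p x) : ¬ ∀ᵐ x ∂μ.restrict s, p x := by
  have := ae_restrict_neBot.2 hμs
  intro h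
  obtain ⟨x, hxs, hx⟩ := ((ae_restrict_mem hs).and h).exists
  exact hp x hxs hx

/-- There exist `ψ, ψ̄ : ℝ → ℝ` agreeing Lebesgue-a.e. such that, with
`φ(t,r) := ψ(r+t)`, `φ̄(t,r) := ψ̄(r+t)` and `τ(x,r) := r`: for every `t ∈ [−1,0]` one has
`φ(t,·) = φ̄(t,·)` a.e. on `(0,1)`, yet for every `x ∈ (0,1)` one has
`φ(−τ(x,r),r) ≠ φ̄(−τ(x,r),r)` for every `r ∈ (0,1)`; in particular for no `x ∈ (0,1)`
does `φ(−τ(x,·),·) = φ̄(−τ(x,·),·)` hold almost everywhere on `(0,1)`. -/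
theorem stmt19 :
    ∃ ψ ψbar : ℝ → ℝ,
      ψ =ᵐ[volume] ψbar ∧
      (∀ t ∈ Icc (-1 : ℝ) 0,
        ∀ᵐ r ∂(volume.restrict (Ioo (0 : ℝ) 1)),
          (fun t r => ψ (r + t)) t r = (fun t r => ψbar (r + t)) t r) ∧
      (∀ x ∈ Ioo (0 : ℝ) 1, ∀ r ∈ Ioo (0 : ℝ) 1,
        (fun t r => ψ (r + t)) (-(fun (_x r' : ℝ) => r') x r) r ≠
          (fun t r => ψbar (r + t)) (-(fun (_x r' : ℝ) => r') x r) r) ∧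
      (∀ x ∈ Ioo (0 : ℝ) 1,
        ¬ ∀ᵐ r ∂(volume.restrict (Ioo (0 : ℝ) 1)),
          (fun t r => ψ (r + t)) (-(fun (_x r' : ℝ) => r') x r) r =
            (fun t r => ψbar (r + t)) (-(fun (_x r' : ℝ) => r') x r) r) := by
  set ψbar : ℝ → ℝ := ({0} : Set ℝ).indicator 1
  have hae : (0 : ℝ → ℝ) =ᵐ[volume] ψbar := (indicator_singleton_ae_eq_zero volume 0 1).symm
  have hdiag : ∀ r : ℝ, (0 : ℝ → ℝ) (r + -r) ≠ ψbar (r + -r) := by simp [ψbar]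
  refine ⟨0, ψbar, hae, fun t _ => ae_restrict_of_ae (ae_eq_comp_add_right hae t),
    fun _ _ r _ => hdiag r, fun _ _ => ?_⟩
  exact not_ae_restrict_of_forall_not measurableSet_Ioo (by simp) fun r _ => hdiag r
end
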